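/- arXiv:2105.09228 — 9 statements merged into one kernel-verified Lean document; each statement's English description precedes it below -/
import Mathlib

section
/- Fix C > 0, σ > 0, κ ≥ 0, p ∈ (0, 1/4), x ∈ [0, 4] and y ∈ ℝ with 3 − (x + y)/2 > 0. Define z̄ₐ = (3 − (x+y)/2)(κ + σ)/(C(κ + (1 − p·x)σ)) and z̄_d = p·x·(3 − (x+y)/2)²·(κ + σ)/(C(κ + (1 − p·x)σ)²). Then z̄ₐ > 0, z̄_d ≥ 0 (with z̄_d > 0 if x > 0), and (z̄ₐ, z̄_d) is an equilibrium of the active/dormant mean-field system, i.e., (3 − (x+y)/2 − C·z̄ₐ)·z̄ₐ + σ·z̄_d = 0 and C·p·x·z̄ₐ² − (κ + σ)·z̄_d = 0. -/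
/-! The dormant equation forces `z_d = C p x z_a² / (κ + σ)`. Substituting this into the
active equation and dividing by `z_a ≠ 0` leaves the linear equation
`a = C z_a (κ + (1 - p x) σ) / (κ + σ)` for the fitness `a = 3 - (x + y)/2`, whose solution is
`z̄ₐ`. Positivity comes from `p x < 1`, which makes `κ + (1 - p x) σ` positive. -/

namespace ActiveDormant

variable (C σ κ q a : ℝ)

/-- Active coordinate of the equilibrium for fitness `a` and dormancy propensity `q = p x`. -/
noncomputable def activeEquilibrium : ℝ := a * (κ + σ) / (C * (κ + (1 - q) * σ))

noncomputable def dormantEquilibrium : ℝ := q * a ^ 2 * (κ + σ) / (C * (κ + (1 - q) * σ) ^ 2)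

theorem dormant_balance (hC : C ≠ 0) :
    C * q * activeEquilibrium C σ κ q a ^ 2 - (κ + σ) * dormantEquilibrium C σ κ q a = 0 := by
  unfold activeEquilibrium dormantEquilibrium
  field_simp
  ring

theorem active_balance (hC : C ≠ 0) (hD : κ + (1 - q) * σ ≠ 0) :
    (a - C * activeEquilibrium C σ κ q a) * activeEquilibrium C σ κ q a +
      σ * dormantEquilibrium C σ κ q a = 0 := by
  unfold activeEquilibrium dormantEquilibrium
  generalize hDdef : κ + (1 - q) * σ = D at hD ⊢
  obtain rfl : κ = D - (1 - q) * σ := by linarith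
  field_simp
  ring

theorem dormancy_denominator_pos (hσ : 0 < σ) (hκ : 0 ≤ κ) (hq : q < 1) :
    0 < κ + (1 - q) * σ := by
  nlinarith

theorem activeEquilibrium_pos (hC : 0 < C) (ha : 0 < a) (hK : 0 < κ + σ)
    (hD : 0 < κ + (1 - q) * σ) : 0 < activeEquilibrium C σ κ q a := by
  unfold activeEquilibrium
  positivity

theorem dormantEquilibrium_nonneg (hC : 0 ≤ C) (hq : 0 ≤ q) (hK : 0 ≤ κ + σ) :
    0 ≤ dormantEquilibrium C σ κ q a := by
  unfold dormantEquilibrium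
  positivity

theorem dormantEquilibrium_pos (hC : 0 < C) (hq : 0 < q) (ha : a ≠ 0) (hK : 0 < κ + σ)
    (hD : κ + (1 - q) * σ ≠ 0) : 0 < dormantEquilibrium C σ κ q a := by
  unfold dormantEquilibrium
  positivity

end ActiveDormant

open ActiveDormant

/-- The pair `(z̄ₐ, z̄_d)` is a (coordinatewise nonnegative, active-positive)
equilibrium of the active/dormant mean-field system for the resident trait `(x, y)`. -/
theorem resident_equilibrium
    (C σ κ p x y za zd : ℝ)
    (hC : 0 < C) (hσ : 0 < σ) (hκ : 0 ≤ κ)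
    (hp0 : 0 < p) (hp1 : p < 1 / 4)
    (hx0 : 0 ≤ x) (hx4 : x ≤ 4)
    (hfit : 0 < 3 - (x + y) / 2)
    (hza : za = (3 - (x + y) / 2) * (κ + σ) / (C * (κ + (1 - p * x) * σ)))
    (hzd : zd = p * x * (3 - (x + y) / 2) ^ 2 * (κ + σ) / (C * (κ + (1 - p * x) * σ) ^ 2)) :
    0 < za ∧ 0 ≤ zd ∧ (0 < x → 0 < zd) ∧
    (3 - (x + y) / 2 - C * za) * za + σ * zd = 0 ∧
    C * p * x * za ^ 2 - (κ + σ) * zd = 0 := by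
  set a := 3 - (x + y) / 2
  have hza : za = activeEquilibrium C σ κ (p * x) a := hza
  have hzd : zd = dormantEquilibrium C σ κ (p * x) a := hzd
  subst hza hzd
  have hpx : p * x < 1 := by nlinarith
  have hK : 0 < κ + σ := by linarith
  have hD := dormancy_denominator_pos σ κ (p * x) hσ hκ hpx
  refine ⟨activeEquilibrium_pos C σ κ _ a hC hfit hK hD,
    dormantEquilibrium_nonneg C σ κ _ a hC.le (by positivity) hK.le,
    fun hx ↦ dormantEquilibrium_pos C σ κ _ a hC (by positivity) hfit.ne' hK hD.ne',
    active_balance C σ κ _ a hC.ne' hD.ne', ?_⟩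
  linear_combination dormant_balance C σ κ (p * x) a hC.ne'
end

section
/- Fix b1, b2, d1, d2 ≥ 0, σ2 > 0, C > 0, p ∈ (0, 1) and T > 0. Let φ = (φ1, φ2) : [0, T] → ℝ² be differentiable with φ1' = (b1 − d1 − C·φ1)·φ1 + σ2·φ2, φ2' = (b2 − d2 − σ2)·φ2 + C·p·φ1², and with φ1(0) > 0 and φ2(0) > 0. Then for all t ∈ [0, T] one has φ1(t) > 0, φ2(t) > 0, and φ1(t) + φ2(t) ≤ (φ1(0) + φ2(0))·exp(2·max(b1 − d1, b2 − d2, 0)·t). -/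
/-!
Both equations have the shape `x' = g(t) x + h(t)` with a forcing term `h ≥ 0` (namely `σ2 φ2`
and `C p φ1²`), so `x · exp (-∫ g)` is nondecreasing and positivity propagates from `t = 0`:
first for `φ2` (with constant `g`), then for `φ1`. Once both are positive, the competition term
only removes mass: `(φ1 + φ2)' = (b1 - d1) φ1 + (b2 - d2) φ2 - C (1 - p) φ1² ≤ M (φ1 + φ2)` with
`M = max (b1 - d1, b2 - d2, 0)`, and Grönwall's inequality gives growth at rate `M ≤ 2 M`.
-/

open Set Real

theorem pos_of_hasDerivAt_eq_mul_add_nonneg {x g h : ℝ → ℝ} {a b : ℝ}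
    (hg : ContinuousOn g (Icc a b)) (hh : ∀ t ∈ Icc a b, 0 ≤ h t)
    (hx : ∀ t ∈ Icc a b, HasDerivAt x (g t * x t + h t) t) (hxa : 0 < x a) :
    ∀ t ∈ Icc a b, 0 < x t := by
  intro t ht
  have hab : a ≤ b := ht.1.trans ht.2
  -- extend `g` continuously to `ℝ` so that `∫ g` is an antiderivative everywhere
  set g' : ℝ → ℝ := g ∘ (↑) ∘ projIcc a b hab
  have hg' : Continuous g' :=
    hg.comp_continuous (continuous_subtype_val.comp continuous_projIcc) fun s => (projIcc a b hab s).2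
  set G : ℝ → ℝ := fun s => ∫ r in a..s, g' r
  have hF : ∀ s ∈ Icc a b,
      HasDerivAt (fun u => x u * exp (-G u)) (h s * exp (-G s)) s := by
    intro s hs
    have hG : HasDerivAt G (g s) s := by
      have hgs : g' s = g s := by simp [g', projIcc_of_mem hab hs]
      exact hgs ▸ (hg'.integral_hasStrictDerivAt a s).hasDerivAt
    refine ((hx s hs).mul hG.neg.exp).congr_deriv ?_
    simp only [Pi.neg_apply]
    ring
  have hmono : MonotoneOn (fun u => x u * exp (-G u)) (Icc a b) :=
    monotoneOn_of_hasDerivWithinAt_nonneg (convex_Icc a b)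
      (fun s hs => (hF s hs).continuousAt.continuousWithinAt)
      (fun s hs => (hF s (interior_subset hs)).hasDerivWithinAt)
      (fun s hs => mul_nonneg (hh s (interior_subset hs)) (exp_pos _).le)
  have hat := hmono (left_mem_Icc.2 hab) ht ht.1
  simp only [G, intervalIntegral.integral_same, neg_zero, exp_zero, mul_one] at hat
  exact pos_of_mul_pos_left (hxa.trans_le hat) (exp_pos _).le

theorem le_mul_exp_of_hasDerivAt_le_mul {f f' : ℝ → ℝ} {K a b : ℝ}
    (hf : ∀ t ∈ Icc a b, HasDerivAt f (f' t) t) (bound : ∀ t ∈ Icc a b, f' t ≤ K * f t) :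
    ∀ t ∈ Icc a b, f t ≤ f a * exp (K * (t - a)) := by
  intro t ht
  simpa [gronwallBound_ε0] using le_gronwallBound_of_liminf_deriv_right_le (K := K) (ε := 0)
    (fun s hs => (hf s hs).continuousAt.continuousWithinAt)
    (fun s hs _ hr => (hf s (Ico_subset_Icc_self hs)).hasDerivWithinAt.liminf_right_slope_le hr)
    le_rfl (fun s hs => by simpa using bound s (Ico_subset_Icc_self hs)) t ht

theorem logistic_bitype_ode_positivity_and_growth_general
    (b1 b2 d1 d2 σ2 C p T : ℝ)
    (hσ2 : 0 < σ2) (hC : 0 < C) (hp0 : 0 < p) (hp1 : p < 1)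
    (φ1 φ2 : ℝ → ℝ)
    (hφ1 : ∀ t ∈ Set.Icc (0 : ℝ) T,
      HasDerivAt φ1 ((b1 - d1 - C * φ1 t) * φ1 t + σ2 * φ2 t) t)
    (hφ2 : ∀ t ∈ Set.Icc (0 : ℝ) T,
      HasDerivAt φ2 ((b2 - d2 - σ2) * φ2 t + C * p * (φ1 t) ^ 2) t)
    (h10 : 0 < φ1 0) (h20 : 0 < φ2 0) :
    ∀ t ∈ Set.Icc (0 : ℝ) T,
      0 < φ1 t ∧ 0 < φ2 t ∧
      φ1 t + φ2 t ≤ (φ1 0 + φ2 0) *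
        Real.exp (2 * max (max (b1 - d1) (b2 - d2)) 0 * t) := by
  have hφ2_pos : ∀ t ∈ Icc 0 T, 0 < φ2 t :=
    pos_of_hasDerivAt_eq_mul_add_nonneg continuousOn_const
      (fun t _ => mul_nonneg (mul_pos hC hp0).le (sq_nonneg _)) hφ2 h20
  have hφ1_cont : ContinuousOn φ1 (Icc 0 T) :=
    continuousOn_of_forall_continuousAt fun t ht => (hφ1 t ht).continuousAt
  have hφ1_pos : ∀ t ∈ Icc 0 T, 0 < φ1 t :=
    pos_of_hasDerivAt_eq_mul_add_nonneg (continuousOn_const.sub (continuousOn_const.mul hφ1_cont))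
      (fun t ht => (mul_pos hσ2 (hφ2_pos t ht)).le) hφ1 h10
  set M := max (max (b1 - d1) (b2 - d2)) 0
  have hM1 : b1 - d1 ≤ M := (le_max_left _ _).trans (le_max_left _ _)
  have hM2 : b2 - d2 ≤ M := (le_max_right _ _).trans (le_max_left _ _)
  have hmass : ∀ t ∈ Icc 0 T, φ1 t + φ2 t ≤ (φ1 0 + φ2 0) * exp (M * t) := by
    simpa using le_mul_exp_of_hasDerivAt_le_mul (f := fun t => φ1 t + φ2 t)
      (fun t ht => (hφ1 t ht).add (hφ2 t ht)) fun t ht => by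
        have h1 := hφ1_pos t ht
        have h2 := hφ2_pos t ht
        nlinarith [mul_nonneg (mul_nonneg hC.le (sub_pos.2 hp1).le) (sq_nonneg (φ1 t))]
  intro t ht
  refine ⟨hφ1_pos t ht, hφ2_pos t ht, (hmass t ht).trans ?_⟩
  have hM : 0 ≤ M := le_max_right _ _
  exact mul_le_mul_of_nonneg_left (exp_le_exp.2 (by nlinarith [ht.1])) (by positivity)

/-- Solutions of the fluid-limit ODE of a logistic bi-type branching process
started with positive coordinates stay positive on `[0, T]`, and the total mass
grows at most exponentially at rate `2·max(b1 − d1, b2 − d2, 0)`. -/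
theorem logistic_bitype_ode_positivity_and_growth
    (b1 b2 d1 d2 σ2 C p T : ℝ)
    (hb1 : 0 ≤ b1) (hb2 : 0 ≤ b2) (hd1 : 0 ≤ d1) (hd2 : 0 ≤ d2)
    (hσ2 : 0 < σ2) (hC : 0 < C) (hp0 : 0 < p) (hp1 : p < 1) (hT : 0 < T)
    (φ1 φ2 : ℝ → ℝ)
    (hφ1 : ∀ t ∈ Set.Icc (0 : ℝ) T,
      HasDerivAt φ1 ((b1 - d1 - C * φ1 t) * φ1 t + σ2 * φ2 t) t)
    (hφ2 : ∀ t ∈ Set.Icc (0 : ℝ) T,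
      HasDerivAt φ2 ((b2 - d2 - σ2) * φ2 t + C * p * (φ1 t) ^ 2) t)
    (h10 : 0 < φ1 0) (h20 : 0 < φ2 0) :
    ∀ t ∈ Set.Icc (0 : ℝ) T,
      0 < φ1 t ∧ 0 < φ2 t ∧
      φ1 t + φ2 t ≤ (φ1 0 + φ2 0) *
        Real.exp (2 * max (max (b1 - d1) (b2 - d2)) 0 * t) :=
  logistic_bitype_ode_positivity_and_growth_general b1 b2 d1 d2 σ2 C p T hσ2 hC hp0 hp1 φ1 φ2 hφ1
    hφ2 h10 h20
end

section
/- Assume that J has a positive real eigenvalue and that every eigenvalue of J̃ has negative real part. Then the only equilibria of the four-dimensional competition system lying in the closed nonnegative orthant [0, ∞)⁴ are (0, 0, 0, 0), (x̄ₐ, x̄_d, 0, 0) and (0, 0, ȳₐ, ȳ_d); that is, any point (xₐ, x_d, yₐ, y_d) ∈ [0, ∞)⁴ at which all four right-hand sides of the system vanish equals one of these three points. -/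
/-!
Eliminating the dormant densities at an equilibrium leaves, for each species whose active
density is positive, a relation that is linear in the total active density `S = xₐ + yₐ`.
So a single-species equilibrium is the barred one, and a coexistence equilibrium would satisfy
`S · ((a1 - d1) β - (b1 - d1) α) = τ (xₐ α + yₐ β)` with `α = d2 + (1 - p) σ2`,
`β = d2 + (1 - q) σ2`. The spectral hypotheses enter only through determinants: a positive
eigenvalue of `J`, whose off-diagonal product is positive, forces `det J < 0`, and the stable
real matrix `J̃` has `det J̃ > 0`. These signs put `(a1 - d1) β - (b1 - d1) α` below both `τ α`
and `τ β`, contradicting the coexistence relation.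
-/

open Polynomial

lemma exists_nonneg_root_quadratic_of_nonpos {t d : ℝ} (hd : d ≤ 0) :
    ∃ r : ℝ, 0 ≤ r ∧ r ^ 2 - t * r + d = 0 := by
  have hdisc : 0 ≤ t ^ 2 - 4 * d := by nlinarith [sq_nonneg t]
  have habs : |t| ≤ √(t ^ 2 - 4 * d) := by
    rw [← Real.sqrt_sq_eq_abs]
    exact Real.sqrt_le_sqrt (by linarith)
  refine ⟨(t + √(t ^ 2 - 4 * d)) / 2, by linarith [neg_abs_le t], ?_⟩
  linear_combination (1 / 4 : ℝ) * Real.sq_sqrt hdisc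

namespace Matrix

lemma det_neg_of_isRoot_charpoly_fin_two {a b c d μ : ℝ} (hd : d < 0) (hbc : 0 ≤ b * c)
    (hμ : 0 < μ) (hroot : (!![a, b; c, d]).charpoly.IsRoot μ) : (!![a, b; c, d]).det < 0 := by
  rw [IsRoot.def, charpoly_fin_two, trace_fin_two_of, det_fin_two_of] at hroot
  rw [det_fin_two_of]
  simp only [eval_add, eval_sub, eval_mul, eval_pow, eval_X, eval_C] at hroot
  have hμa : a ≤ μ := by nlinarith
  nlinarith

lemma det_pos_of_forall_isRoot_charpoly_re_neg (A : Matrix (Fin 2) (Fin 2) ℝ)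
    (h : ∀ z : ℂ, (A.map Complex.ofReal).charpoly.IsRoot z → z.re < 0) : 0 < A.det := by
  by_contra! hdet
  obtain ⟨r, hr, hroot⟩ := exists_nonneg_root_quadratic_of_nonpos (t := A.trace) hdet
  have hroot' : A.charpoly.IsRoot r := by
    simpa [charpoly_fin_two] using hroot
  have := h r (by
    rw [show A.map Complex.ofReal = A.map Complex.ofRealHom from rfl, charpoly_map]
    exact hroot'.map)
  simp only [Complex.ofReal_re] at this
  linarith

end Matrix

section Competition

variable {d2 σ2 C p q : ℝ}

/-- The block of the linearisation at a single-species equilibrium `(X, ·, 0, 0)` in the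
direction of the absent species; `J` and `J̃` are of this form. -/
lemma det_invasion_matrix {r u X : ℝ} (hC : C ≠ 0) (hα : d2 + (1 - p) * σ2 ≠ 0)
    (hX : X = r * (d2 + σ2) / (C * (d2 + (1 - p) * σ2))) :
    (d2 + (1 - p) * σ2) * (!![u - C * X, q * C * X; σ2, -(d2 + σ2)]).det =
      (d2 + σ2) * (r * (d2 + (1 - q) * σ2) - u * (d2 + (1 - p) * σ2)) := by
  have hCX : C * X * (d2 + (1 - p) * σ2) = r * (d2 + σ2) := by
    rw [hX, mul_div_assoc', mul_div_mul_left _ _ hC, div_mul_cancel₀ _ hα]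
  rw [Matrix.det_fin_two_of]
  linear_combination (d2 + (1 - q) * σ2) * hCX

lemma invasion_gap_of_isRoot_charpoly_pos {r u X μ : ℝ} (hC : 0 < C) (hq : 0 ≤ q)
    (hσ2 : 0 ≤ σ2) (hα : 0 < d2 + (1 - p) * σ2) (hD : 0 < d2 + σ2) (hr : 0 ≤ r)
    (hX : X = r * (d2 + σ2) / (C * (d2 + (1 - p) * σ2))) (hμ : 0 < μ)
    (hroot : (!![u - C * X, q * C * X; σ2, -(d2 + σ2)]).charpoly.IsRoot μ) :
    r * (d2 + (1 - q) * σ2) < u * (d2 + (1 - p) * σ2) := by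
  have hX0 : 0 ≤ X := hX ▸ div_nonneg (mul_nonneg hr hD.le) (by positivity)
  have hdet := mul_neg_of_pos_of_neg hα <|
    Matrix.det_neg_of_isRoot_charpoly_fin_two (by linarith) (by positivity) hμ hroot
  rw [det_invasion_matrix hC.ne' hα.ne' hX] at hdet
  linarith [neg_of_mul_neg_right hdet hD.le]

lemma invasion_gap_of_stable {r u X : ℝ} (hC : C ≠ 0) (hα : 0 < d2 + (1 - p) * σ2)
    (hD : 0 < d2 + σ2) (hX : X = r * (d2 + σ2) / (C * (d2 + (1 - p) * σ2)))
    (hstable : ∀ z : ℂ, ((!![u - C * X, q * C * X; σ2, -(d2 + σ2)]).map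
      Complex.ofReal).charpoly.IsRoot z → z.re < 0) :
    u * (d2 + (1 - p) * σ2) < r * (d2 + (1 - q) * σ2) := by
  have hdet := mul_pos hα (Matrix.det_pos_of_forall_isRoot_charpoly_re_neg _ hstable)
  rw [det_invasion_matrix hC hα.ne' hX] at hdet
  linarith [pos_of_mul_pos_right hdet hD.le]

lemma single_species_equilibrium {r x xd : ℝ} (hC : C ≠ 0) (hα : d2 + (1 - p) * σ2 ≠ 0)
    (hD : d2 + σ2 ≠ 0) (e1 : x * (r - C * x) + σ2 * xd = 0)
    (e2 : p * C * x * x - (d2 + σ2) * xd = 0) :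
    (x = 0 ∧ xd = 0) ∨
      (x = r * (d2 + σ2) / (C * (d2 + (1 - p) * σ2)) ∧
        xd = p * r ^ 2 * (d2 + σ2) / (C * (d2 + (1 - p) * σ2) ^ 2)) := by
  have hxd : xd = p * C * x * x / (d2 + σ2) := by
    field_simp
    linear_combination -e2
  have hx : x * (r * (d2 + σ2) - C * x * (d2 + (1 - p) * σ2)) = 0 := by
    linear_combination (d2 + σ2) * e1 + σ2 * e2
  rcases mul_eq_zero.mp hx with rfl | hx
  · left
    simpa using hxd
  · have hx : x = r * (d2 + σ2) / (C * (d2 + (1 - p) * σ2)) := by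
      rw [eq_div_iff (mul_ne_zero hC hα)]
      linear_combination -hx
    right
    refine ⟨hx, ?_⟩
    rw [hxd, hx]
    field_simp

lemma not_coexistence_equilibrium {a1 b1 d1 τ xa xd ya yd : ℝ} (hD : d2 + σ2 ≠ 0)
    (hxa : 0 < xa) (hya : 0 < ya)
    (hx_inv : (a1 - d1) * (d2 + (1 - q) * σ2) < (b1 + τ - d1) * (d2 + (1 - p) * σ2))
    (hy_inv : (a1 - τ - d1) * (d2 + (1 - q) * σ2) < (b1 - d1) * (d2 + (1 - p) * σ2))
    (e1 : xa * (a1 - d1 - C * (xa + ya)) + σ2 * xd - τ * xa * ya / (xa + ya) = 0)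
    (e2 : p * C * xa * (xa + ya) - (d2 + σ2) * xd = 0)
    (e3 : ya * (b1 - d1 - C * (xa + ya)) + σ2 * yd + τ * xa * ya / (xa + ya) = 0)
    (e4 : q * C * ya * (xa + ya) - (d2 + σ2) * yd = 0) : False := by
  set S := xa + ya
  have ht : τ * xa * ya / S * S = τ * xa * ya := div_mul_cancel₀ _ (by positivity)
  have hA : (a1 - d1) * (d2 + σ2) * S - C * S ^ 2 * (d2 + (1 - p) * σ2) -
      τ * ya * (d2 + σ2) = 0 := by
    refine (mul_eq_zero.mp ?_).resolve_left hxa.ne'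
    linear_combination (d2 + σ2) * S * e1 + σ2 * S * e2 + (d2 + σ2) * ht
  have hB : (b1 - d1) * (d2 + σ2) * S - C * S ^ 2 * (d2 + (1 - q) * σ2) +
      τ * xa * (d2 + σ2) = 0 := by
    refine (mul_eq_zero.mp ?_).resolve_left hya.ne'
    linear_combination (d2 + σ2) * S * e3 + σ2 * S * e4 - (d2 + σ2) * ht
  have hbalance : S * ((a1 - d1) * (d2 + (1 - q) * σ2) - (b1 - d1) * (d2 + (1 - p) * σ2)) =
      τ * (xa * (d2 + (1 - p) * σ2) + ya * (d2 + (1 - q) * σ2)) := by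
    refine mul_left_cancel₀ hD ?_
    linear_combination (d2 + (1 - q) * σ2) * hA - (d2 + (1 - p) * σ2) * hB
  nlinarith [mul_lt_mul_of_pos_left hx_inv hxa, mul_lt_mul_of_pos_left hy_inv hya]

end Competition

theorem four_dim_competition_only_equilibria_general
    (a1 b1 d1 d2 τ C σ2 p q xabar xdbar yabar ydbar : ℝ)
    (ha1 : d1 < a1) (hd2 : 0 ≤ d2)
    (hC : 0 < C) (hσ2 : 0 < σ2)
    (hp1 : p < 1) (hq0 : 0 < q) (hq1 : q < 1)
    (hxabar : xabar = (a1 - d1) * (d2 + σ2) / (C * (d2 + (1 - p) * σ2)))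
    (hxdbar : xdbar = p * (a1 - d1) ^ 2 * (d2 + σ2) / (C * (d2 + (1 - p) * σ2) ^ 2))
    (hyabar : yabar = (b1 - d1) * (d2 + σ2) / (C * (d2 + (1 - q) * σ2)))
    (hydbar : ydbar = q * (b1 - d1) ^ 2 * (d2 + σ2) / (C * (d2 + (1 - q) * σ2) ^ 2))
    (hJ : ∃ lam : ℝ, 0 < lam ∧
      (Matrix.charpoly
        !![b1 + τ - d1 - C * xabar, q * C * xabar; σ2, -(d2 + σ2)]).IsRoot lam)
    (hJt : ∀ z : ℂ,
      ((Matrix.map !![a1 - τ - d1 - C * yabar, p * C * yabar; σ2, -(d2 + σ2)]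
        Complex.ofReal).charpoly).IsRoot z → z.re < 0) :
    ∀ xa xd ya yd : ℝ, 0 ≤ xa → 0 ≤ xd → 0 ≤ ya → 0 ≤ yd →
      xa * (a1 - d1 - C * (xa + ya)) + σ2 * xd - τ * xa * ya / (xa + ya) = 0 →
      p * C * xa * (xa + ya) - (d2 + σ2) * xd = 0 →
      ya * (b1 - d1 - C * (xa + ya)) + σ2 * yd + τ * xa * ya / (xa + ya) = 0 →
      q * C * ya * (xa + ya) - (d2 + σ2) * yd = 0 →
      (xa, xd, ya, yd) = ((0 : ℝ), (0 : ℝ), (0 : ℝ), (0 : ℝ)) ∨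
      (xa, xd, ya, yd) = (xabar, xdbar, (0 : ℝ), (0 : ℝ)) ∨
      (xa, xd, ya, yd) = ((0 : ℝ), (0 : ℝ), yabar, ydbar) := by
  intro xa xd ya yd hxa _ hya _ e1 e2 e3 e4
  have hD : 0 < d2 + σ2 := by positivity
  have hα : 0 < d2 + (1 - p) * σ2 := add_pos_of_nonneg_of_pos hd2 (mul_pos (by linarith) hσ2)
  have hβ : 0 < d2 + (1 - q) * σ2 := add_pos_of_nonneg_of_pos hd2 (mul_pos (by linarith) hσ2)
  obtain ⟨μ, hμ, hroot⟩ := hJ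
  have hx_inv := invasion_gap_of_isRoot_charpoly_pos hC hq0.le hσ2.le hα hD
    (sub_nonneg.2 ha1.le) hxabar hμ hroot
  have hy_inv := invasion_gap_of_stable hC.ne' hβ hD hyabar hJt
  rcases hya.eq_or_lt with rfl | hya
  · have hyd : yd = 0 := by simpa [hD.ne'] using e4
    simp only [add_zero, mul_zero, zero_div, sub_zero] at e1 e2
    rcases single_species_equilibrium hC.ne' hα.ne' hD.ne' e1 e2 with ⟨rfl, rfl⟩ | ⟨rfl, rfl⟩
    · simp [hyd]
    · simp [hxabar, hxdbar, hyd]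
  rcases hxa.eq_or_lt with rfl | hxa
  · have hxd : xd = 0 := by simpa [hD.ne'] using e2
    simp only [zero_add, mul_zero, zero_mul, zero_div, add_zero] at e3 e4
    rcases single_species_equilibrium hC.ne' hβ.ne' hD.ne' e3 e4 with ⟨rfl, rfl⟩ | ⟨rfl, rfl⟩
    · simp [hxd]
    · simp [hyabar, hydbar, hxd]
  exact (not_coexistence_equilibrium hD.ne' hxa hya hx_inv hy_inv e1 e2 e3 e4).elim

/-- If `J` has a positive real eigenvalue and every eigenvalue of `J̃` has
negative real part, then the only nonnegative equilibria of the
four-dimensional competition system are `(0,0,0,0)`, `(x̄ₐ, x̄_d, 0, 0)` and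
`(0, 0, ȳₐ, ȳ_d)`. (The transfer term `τ·xₐ·yₐ/(xₐ+yₐ)` is `0` when
`xₐ + yₐ = 0`, which agrees with Lean's convention `z/0 = 0`.) -/
theorem four_dim_competition_only_equilibria
    (a1 b1 d1 d2 τ C σ2 p q xabar xdbar yabar ydbar : ℝ)
    (hd1 : 0 ≤ d1) (ha1 : d1 < a1) (hb1 : d1 < b1) (hd2 : 0 ≤ d2) (hτ : 0 ≤ τ)
    (hC : 0 < C) (hσ2 : 0 < σ2)
    (hp0 : 0 < p) (hp1 : p < 1) (hq0 : 0 < q) (hq1 : q < 1)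
    (hxabar : xabar = (a1 - d1) * (d2 + σ2) / (C * (d2 + (1 - p) * σ2)))
    (hxdbar : xdbar = p * (a1 - d1) ^ 2 * (d2 + σ2) / (C * (d2 + (1 - p) * σ2) ^ 2))
    (hyabar : yabar = (b1 - d1) * (d2 + σ2) / (C * (d2 + (1 - q) * σ2)))
    (hydbar : ydbar = q * (b1 - d1) ^ 2 * (d2 + σ2) / (C * (d2 + (1 - q) * σ2) ^ 2))
    (hJ : ∃ lam : ℝ, 0 < lam ∧
      (Matrix.charpoly
        !![b1 + τ - d1 - C * xabar, q * C * xabar; σ2, -(d2 + σ2)]).IsRoot lam)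
    (hJt : ∀ z : ℂ,
      ((Matrix.map !![a1 - τ - d1 - C * yabar, p * C * yabar; σ2, -(d2 + σ2)]
        Complex.ofReal).charpoly).IsRoot z → z.re < 0) :
    ∀ xa xd ya yd : ℝ, 0 ≤ xa → 0 ≤ xd → 0 ≤ ya → 0 ≤ yd →
      xa * (a1 - d1 - C * (xa + ya)) + σ2 * xd - τ * xa * ya / (xa + ya) = 0 →
      p * C * xa * (xa + ya) - (d2 + σ2) * xd = 0 →
      ya * (b1 - d1 - C * (xa + ya)) + σ2 * yd + τ * xa * ya / (xa + ya) = 0 →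
      q * C * ya * (xa + ya) - (d2 + σ2) * yd = 0 →
      (xa, xd, ya, yd) = ((0 : ℝ), (0 : ℝ), (0 : ℝ), (0 : ℝ)) ∨
      (xa, xd, ya, yd) = (xabar, xdbar, (0 : ℝ), (0 : ℝ)) ∨
      (xa, xd, ya, yd) = ((0 : ℝ), (0 : ℝ), yabar, ydbar) :=
  four_dim_competition_only_equilibria_general a1 b1 d1 d2 τ C σ2 p q xabar xdbar yabar ydbar ha1
    hd2 hC hσ2 hp1 hq0 hq1 hxabar hxdbar hyabar hydbar hJ hJt
end

section
/- Assume that every eigenvalue of J̃ has negative real part. Then every complex eigenvalue of the 4×4 real matrix A = [[a1 − d1 − C·ȳₐ − τ, σ2, 0, 0], [p·C·ȳₐ, −d2 − σ2, 0, 0], [−C·ȳₐ + τ, 0, b1 − d1 − 2C·ȳₐ, σ2], [q·C·ȳₐ, 0, 2q·C·ȳₐ, −d2 − σ2]], which is the Jacobian of the four-dimensional competition system at the point (0, 0, ȳₐ, ȳ_d), has strictly negative real part; in particular (0, 0, ȳₐ, ȳ_d) is an asymptotically stable equilibrium. -/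
/-!
The Jacobian is block lower triangular: its upper-left block is `J̃ᵀ` and its lower-right
block is the Jacobian `B` of the resident population alone at its equilibrium
`(ȳₐ, ȳ_d)`. So its spectrum is that of `J̃` together with that of `B`, and the equilibrium
relation `C ȳₐ (d₂ + (1 - q) σ₂) = (b₁ - d₁)(d₂ + σ₂)` gives `tr B < 0 < det B`, which for a
real `2 × 2` matrix forces both eigenvalues into the open left half-plane.
-/

open Polynomial Matrix

lemma Complex.re_neg_of_sq_add_mul_add_eq_zero {b c : ℝ} (hb : 0 < b) (hc : 0 < c) {z : ℂ}
    (h : z ^ 2 + b * z + c = 0) : z.re < 0 := by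
  obtain ⟨hre, him⟩ := Complex.ext_iff.mp h
  simp only [pow_two, Complex.add_re, Complex.add_im, Complex.mul_re, Complex.mul_im,
    Complex.ofReal_re, Complex.ofReal_im, Complex.zero_re, Complex.zero_im] at hre him
  by_contra! hz
  rcases mul_eq_zero.mp (show z.im * (2 * z.re + b) = 0 by linarith) with him0 | hre0
  · rw [him0] at hre
    nlinarith
  · linarith

lemma Matrix.re_neg_of_isRoot_charpoly_of_trace_neg_of_det_pos
    {M : Matrix (Fin 2) (Fin 2) ℝ} (htr : M.trace < 0) (hdet : 0 < M.det) {z : ℂ}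
    (hz : (M.charpoly.map Complex.ofRealHom).IsRoot z) : z.re < 0 := by
  rw [charpoly_fin_two, IsRoot.def] at hz
  simp only [Polynomial.map_add, Polynomial.map_sub, Polynomial.map_mul, Polynomial.map_pow,
    map_X, map_C, eval_add, eval_sub, eval_mul, eval_pow, eval_X, eval_C,
    Complex.ofRealHom_eq_coe] at hz
  refine Complex.re_neg_of_sq_add_mul_add_eq_zero (b := -M.trace) (neg_pos.mpr htr) hdet ?_
  push_cast
  linear_combination hz

lemma Matrix.charpoly_fin_four_of_blockLowerTriangular {R : Type*} [CommRing R]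
    (M K N : Matrix (Fin 2) (Fin 2) R) :
    (!![M 0 0, M 0 1, 0, 0; M 1 0, M 1 1, 0, 0;
        K 0 0, K 0 1, N 0 0, N 0 1; K 1 0, K 1 1, N 1 0, N 1 1]).charpoly =
      M.charpoly * N.charpoly := by
  rw [← charpoly_fromBlocks_zero₁₂ M K N, ← charpoly_reindex finSumFinEquiv]
  congr 1
  ext i j
  fin_cases i <;> fin_cases j <;> rfl

/-- Jacobian of the single bi-type population `yₐ' = yₐ (β - C yₐ) + σ₂ y_d`,
`y_d' = q C yₐ² - (d₂ + σ₂) y_d` at a point with `C yₐ = y`. -/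
def residentJacobian (β y d2 σ2 q : ℝ) : Matrix (Fin 2) (Fin 2) ℝ :=
  !![β - 2 * y, σ2; 2 * q * y, -d2 - σ2]

lemma re_neg_of_isRoot_charpoly_residentJacobian {β y d2 σ2 q : ℝ} (hβ : 0 < β) (hd2 : 0 ≤ d2)
    (hσ2 : 0 < σ2) (hq0 : 0 < q) (hq1 : q < 1)
    (hequil : y * (d2 + (1 - q) * σ2) = β * (d2 + σ2)) {z : ℂ}
    (hz : ((residentJacobian β y d2 σ2 q).charpoly.map Complex.ofRealHom).IsRoot z) :
    z.re < 0 := by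
  have hu : 0 < d2 + (1 - q) * σ2 := by nlinarith
  have hβy : β ≤ y := by
    have hexcess : (y - β) * (d2 + (1 - q) * σ2) = β * q * σ2 := by linear_combination hequil
    nlinarith [mul_pos (mul_pos hβ hq0) hσ2]
  refine re_neg_of_isRoot_charpoly_of_trace_neg_of_det_pos ?_ ?_ hz
  · rw [residentJacobian, trace_fin_two_of]
    linarith
  · rw [residentJacobian, det_fin_two_of,
      show (β - 2 * y) * (-d2 - σ2) - σ2 * (2 * q * y) = β * (d2 + σ2) by
        linear_combination 2 * hequil]
    positivity

theorem four_dim_competition_jacobian_stable_general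
    (a1 b1 d1 d2 τ C σ2 p q yabar : ℝ)
    (hb1 : d1 < b1) (hd2 : 0 ≤ d2)
    (hC : 0 < C) (hσ2 : 0 < σ2)
    (hq0 : 0 < q) (hq1 : q < 1)
    (hyabar : yabar = (b1 - d1) * (d2 + σ2) / (C * (d2 + (1 - q) * σ2)))
    (hJt : ∀ z : ℂ,
      ((Matrix.map !![a1 - τ - d1 - C * yabar, p * C * yabar; σ2, -(d2 + σ2)]
        Complex.ofReal).charpoly).IsRoot z → z.re < 0)
    (A : Matrix (Fin 4) (Fin 4) ℝ)
    (hA : A = !![a1 - d1 - C * yabar - τ, σ2, 0, 0;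
                 p * C * yabar, -d2 - σ2, 0, 0;
                 -C * yabar + τ, 0, b1 - d1 - 2 * C * yabar, σ2;
                 q * C * yabar, 0, 2 * q * C * yabar, -d2 - σ2]) :
    ∀ z : ℂ, ((A.map Complex.ofReal).charpoly).IsRoot z → z.re < 0 := by
  intro z hz
  set Jt : Matrix (Fin 2) (Fin 2) ℝ := !![a1 - τ - d1 - C * yabar, p * C * yabar; σ2, -(d2 + σ2)]
  set B := residentJacobian (b1 - d1) (C * yabar) d2 σ2 q
  have hchar : A.charpoly = Jt.charpoly * B.charpoly := by
    rw [← charpoly_transpose Jt, ← charpoly_fin_four_of_blockLowerTriangular Jtᵀ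
      !![-C * yabar + τ, 0; q * C * yabar, 0] B, hA]
    congr 1
    ext i j
    fin_cases i <;> fin_cases j <;> simp [Jt, B, residentJacobian] <;> ring
  have hequil : C * yabar * (d2 + (1 - q) * σ2) = (b1 - d1) * (d2 + σ2) := by
    rw [hyabar, mul_right_comm]
    exact mul_div_cancel₀ _ (mul_pos hC (by nlinarith)).ne'
  have hroot : (Jt.charpoly.map Complex.ofRealHom * B.charpoly.map Complex.ofRealHom).IsRoot z := by
    rwa [← Polynomial.map_mul, ← hchar, ← charpoly_map]
  rcases root_mul.mp hroot with hJz | hBz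
  · exact hJt z ((charpoly_map Jt Complex.ofRealHom).symm ▸ hJz)
  · exact re_neg_of_isRoot_charpoly_residentJacobian (sub_pos.2 hb1) hd2 hσ2 hq0 hq1 hequil hBz

/-- If every eigenvalue of `J̃` has negative real part, then every eigenvalue of
the Jacobian `A` of the four-dimensional competition system at `(0, 0, ȳₐ, ȳ_d)`
has strictly negative real part. -/
theorem four_dim_competition_jacobian_stable
    (a1 b1 d1 d2 τ C σ2 p q yabar ydbar : ℝ)
    (hd1 : 0 ≤ d1) (ha1 : d1 < a1) (hb1 : d1 < b1) (hd2 : 0 ≤ d2) (hτ : 0 ≤ τ)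
    (hC : 0 < C) (hσ2 : 0 < σ2)
    (hp0 : 0 < p) (hp1 : p < 1) (hq0 : 0 < q) (hq1 : q < 1)
    (hyabar : yabar = (b1 - d1) * (d2 + σ2) / (C * (d2 + (1 - q) * σ2)))
    (hydbar : ydbar = q * (b1 - d1) ^ 2 * (d2 + σ2) / (C * (d2 + (1 - q) * σ2) ^ 2))
    (hJt : ∀ z : ℂ,
      ((Matrix.map !![a1 - τ - d1 - C * yabar, p * C * yabar; σ2, -(d2 + σ2)]
        Complex.ofReal).charpoly).IsRoot z → z.re < 0)
    (A : Matrix (Fin 4) (Fin 4) ℝ)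
    (hA : A = !![a1 - d1 - C * yabar - τ, σ2, 0, 0;
                 p * C * yabar, -d2 - σ2, 0, 0;
                 -C * yabar + τ, 0, b1 - d1 - 2 * C * yabar, σ2;
                 q * C * yabar, 0, 2 * q * C * yabar, -d2 - σ2]) :
    ∀ z : ℂ, ((A.map Complex.ofReal).charpoly).IsRoot z → z.re < 0 :=
  four_dim_competition_jacobian_stable_general a1 b1 d1 d2 τ C σ2 p q yabar hb1 hd2 hC hσ2 hq0 hq1
    hyabar hJt A hA
end

section
/- Fix b1 > d1 ≥ 0, d2 ≥ 0, σ2 > 0, C > 0 and q ∈ (0, 1), and set ȳₐ = (b1 − d1)(d2 + σ2)/(C(d2 + (1 − q)σ2)). Then the matrix B = [[b1 − d1 − 2C·ȳₐ, σ2], [2q·C·ȳₐ, −(d2 + σ2)]] satisfies det(B) = (d2 + σ2)(b1 − d1) > 0 and trace(B) < 0, and consequently every eigenvalue of B has strictly negative real part. -/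
/-!
The eigenvalues of a real 2 × 2 matrix are the roots of `z ^ 2 - T z + D` with `T` its trace and `D`
its determinant. If `T < 0 < D`, a real root cannot be `≥ 0` (then `z ^ 2 - T z + D > 0`), and a
nonreal pair of roots has real part `T / 2 < 0`. For the block `B`, the equilibrium relation
`C ȳₐ (d2 + (1 - q) σ2) = (b1 - d1) (d2 + σ2)` gives the determinant, and it also gives
`C ȳₐ ≥ b1 - d1`, which makes the trace `(b1 - d1) - 2 C ȳₐ - (d2 + σ2)` negative.
-/

theorem Complex.re_neg_of_sq_sub_mul_add_eq_zero {T D : ℝ} (hT : T < 0) (hD : 0 < D) {z : ℂ}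
    (h : z ^ 2 - T * z + D = 0) : z.re < 0 := by
  have hre : z.re ^ 2 - z.im ^ 2 - T * z.re + D = 0 := by
    simpa [pow_two] using congrArg Complex.re h
  have him : z.im * (2 * z.re - T) = 0 := by
    have := congrArg Complex.im h
    simp only [pow_two, add_im, sub_im, mul_im, ofReal_re, ofReal_im, zero_im] at this
    linear_combination this
  rcases mul_eq_zero.mp him with hreal | hpair
  · nlinarith [sq_nonneg z.re]
  · linarith

theorem Matrix.re_neg_of_isRoot_charpoly_map_ofReal {A : Matrix (Fin 2) (Fin 2) ℝ}
    (htr : A.trace < 0) (hdet : 0 < A.det) {z : ℂ}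
    (hz : (A.map Complex.ofReal).charpoly.IsRoot z) : z.re < 0 := by
  have htr' : (A.map Complex.ofReal).trace = A.trace :=
    (AddMonoidHom.map_trace Complex.ofRealHom A).symm
  have hdet' : (A.map Complex.ofReal).det = A.det := (RingHom.map_det Complex.ofRealHom A).symm
  rw [charpoly_fin_two, htr', hdet'] at hz
  refine Complex.re_neg_of_sq_sub_mul_add_eq_zero htr hdet ?_
  simpa using hz

theorem jacobian_block_stable_general
    (b1 d1 d2 σ2 C q yabar : ℝ)
    (hb1 : d1 < b1) (hd2 : 0 ≤ d2)
    (hσ2 : 0 < σ2) (hC : 0 < C) (hq0 : 0 < q) (hq1 : q < 1)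
    (hyabar : yabar = (b1 - d1) * (d2 + σ2) / (C * (d2 + (1 - q) * σ2)))
    (B : Matrix (Fin 2) (Fin 2) ℝ)
    (hB : B = !![b1 - d1 - 2 * C * yabar, σ2; 2 * q * C * yabar, -(d2 + σ2)]) :
    B.det = (d2 + σ2) * (b1 - d1) ∧ 0 < B.det ∧ B.trace < 0 ∧
    (∀ z : ℂ, ((B.map Complex.ofReal).charpoly).IsRoot z → z.re < 0) := by
  have hden : 0 < d2 + (1 - q) * σ2 := by nlinarith
  have hequil : C * yabar * (d2 + (1 - q) * σ2) = (b1 - d1) * (d2 + σ2) := by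
    rw [hyabar, mul_div_assoc', div_mul_eq_mul_div, div_eq_iff (mul_pos hC hden).ne']; ring
  have hdet : B.det = (d2 + σ2) * (b1 - d1) := by
    rw [hB, Matrix.det_fin_two_of]; linear_combination 2 * hequil
  have hdet_pos : 0 < B.det := hdet ▸ mul_pos (by positivity) (sub_pos.2 hb1)
  have hCy : b1 - d1 ≤ C * yabar := by
    refine le_of_mul_le_mul_right ?_ hden
    rw [hequil]
    exact mul_le_mul_of_nonneg_left (by nlinarith) (sub_pos.2 hb1).le
  have htr : B.trace < 0 := by
    rw [hB, Matrix.trace_fin_two_of]; linarith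
  exact ⟨hdet, hdet_pos, htr, fun z hz ↦ B.re_neg_of_isRoot_charpoly_map_ofReal htr hdet_pos hz⟩

/-- The lower-right block `B = [[b1 − d1 − 2C·ȳₐ, σ2], [2q·C·ȳₐ, −(d2+σ2)]]`
of the Jacobian at `(0, 0, ȳₐ, ȳ_d)` has determinant `(d2+σ2)(b1−d1) > 0` and
negative trace, so every eigenvalue of `B` has strictly negative real part. -/
theorem jacobian_block_stable
    (b1 d1 d2 σ2 C q yabar : ℝ)
    (hd1 : 0 ≤ d1) (hb1 : d1 < b1) (hd2 : 0 ≤ d2)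
    (hσ2 : 0 < σ2) (hC : 0 < C) (hq0 : 0 < q) (hq1 : q < 1)
    (hyabar : yabar = (b1 - d1) * (d2 + σ2) / (C * (d2 + (1 - q) * σ2)))
    (B : Matrix (Fin 2) (Fin 2) ℝ)
    (hB : B = !![b1 - d1 - 2 * C * yabar, σ2; 2 * q * C * yabar, -(d2 + σ2)]) :
    B.det = (d2 + σ2) * (b1 - d1) ∧ 0 < B.det ∧ B.trace < 0 ∧
    (∀ z : ℂ, ((B.map Complex.ofReal).charpoly).IsRoot z → z.re < 0) :=
  jacobian_block_stable_general b1 d1 d2 σ2 C q yabar hb1 hd2 hσ2 hC hq0 hq1 hyabar B hB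
end

section
/- Assume λ > 0 is an eigenvalue of J admitting a left eigenvector (πₐ, π_d) with πₐ > 0, π_d > 0 and πₐ + π_d = 1. Then for every A > 0 there exists ε₀ > 0 such that for all 0 < ε ≤ ε₀ and all real numbers xₐ, yₐ, y_d with |xₐ − x̄ₐ| ≤ A·√ε, yₐ > 0, y_d > 0, yₐ + y_d < √ε and y_d/yₐ = π_d/πₐ, the inequalities q·C·(xₐ + yₐ)/(d2 + σ2) > y_d/yₐ > (d1 − b1 + C(xₐ + yₐ) − τ·xₐ/(xₐ + yₐ))/σ2 hold. -/
/-!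
The two left-eigenvector equations say that the ratio `π_d / πₐ` satisfies both invasion
inequalities strictly at the boundary equilibrium `(xₐ, yₐ) = (x̄ₐ, 0)`, with margins coming
from `λ > 0`. Both sides are continuous there (because `x̄ₐ ≠ 0`), so the strict inequalities
persist on a neighbourhood of `(x̄ₐ, 0)`, and every admissible `(xₐ, yₐ)` lies in that
neighbourhood once `ε` is small.
-/

open Filter Topology

section LeftEigenvector

variable {b1 d1 d2 τ C σ2 q x lam πa πd : ℝ}

lemma left_eigen_ratio_lt (hden : 0 < d2 + σ2) (hlam : 0 < lam) (hπa : 0 < πa) (hπd : 0 < πd)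
    (heig : πa * (q * C * x) + πd * (-(d2 + σ2)) = lam * πd) :
    πd / πa < q * C * x / (d2 + σ2) := by
  rw [div_lt_div_iff₀ hπa hden]
  nlinarith [mul_pos hlam hπd]

lemma lt_left_eigen_ratio (hσ2 : 0 < σ2) (hlam : 0 < lam) (hπa : 0 < πa)
    (heig : πa * (b1 + τ - d1 - C * x) + πd * σ2 = lam * πa) :
    (d1 - b1 + C * x - τ) / σ2 < πd / πa := by
  rw [div_lt_div_iff₀ hσ2 hπa]
  nlinarith [mul_pos hlam hπa]

end LeftEigenvector

lemma eventually_invasion_criterion {b1 d1 d2 τ C σ2 q x r : ℝ} (hx : x ≠ 0)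
    (hbirth : r < q * C * x / (d2 + σ2)) (hdeath : (d1 - b1 + C * x - τ) / σ2 < r) :
    ∀ᶠ z : ℝ × ℝ in 𝓝 (x, 0),
      r < q * C * (z.1 + z.2) / (d2 + σ2) ∧
      (d1 - b1 + C * (z.1 + z.2) - τ * z.1 / (z.1 + z.2)) / σ2 < r := by
  have hsum : (x, (0 : ℝ)).1 + (x, (0 : ℝ)).2 ≠ 0 := by simpa using hx
  refine (continuousAt_const.eventually_lt (by fun_prop) (by simpa using hbirth)).and
    ((ContinuousAt.eventually_lt (by fun_prop (disch := exact hsum)) continuousAt_const ?_))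
  simpa [div_self hx, mul_div_assoc] using hdeath

lemma exists_forall_sqrt_box_of_eventually {P : ℝ × ℝ → Prop} {x₀ A : ℝ}
    (hP : ∀ᶠ z in 𝓝 (x₀, 0), P z) (hA : 0 ≤ A) :
    ∃ ε₀ : ℝ, 0 < ε₀ ∧ ∀ ε : ℝ, 0 < ε → ε ≤ ε₀ →
      ∀ x y : ℝ, |x - x₀| ≤ A * Real.sqrt ε → |y| < Real.sqrt ε → P (x, y) := by
  obtain ⟨δ, hδ, hball⟩ := Metric.eventually_nhds_iff.mp hP
  refine ⟨(δ / (A + 1)) ^ 2, by positivity, fun ε hε hεε₀ x y hx hy => hball ?_⟩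
  have hs : (A + 1) * Real.sqrt ε ≤ δ := by
    have := Real.sqrt_le_sqrt hεε₀
    rw [Real.sqrt_sq (by positivity), le_div_iff₀ (by positivity)] at this
    linarith
  have hs0 : 0 < Real.sqrt ε := Real.sqrt_pos.mpr hε
  rw [Prod.dist_eq, max_lt_iff, Real.dist_eq, Real.dist_eq, sub_zero]
  constructor <;> nlinarith

theorem good_initial_condition_invading_general
    (a1 b1 d1 d2 τ C σ2 p q xabar lam πa πd : ℝ)
    (ha1 : d1 < a1) (hd2 : 0 ≤ d2)
    (hC : 0 < C) (hσ2 : 0 < σ2)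
    (hp1 : p < 1)
    (hxabar : xabar = (a1 - d1) * (d2 + σ2) / (C * (d2 + (1 - p) * σ2)))
    (hlam : 0 < lam)
    (hπa : 0 < πa) (hπd : 0 < πd)
    (heig1 : πa * (b1 + τ - d1 - C * xabar) + πd * σ2 = lam * πa)
    (heig2 : πa * (q * C * xabar) + πd * (-(d2 + σ2)) = lam * πd) :
    ∀ A : ℝ, 0 < A → ∃ ε₀ : ℝ, 0 < ε₀ ∧
      ∀ ε : ℝ, 0 < ε → ε ≤ ε₀ →
        ∀ xa ya yd : ℝ,
          |xa - xabar| ≤ A * Real.sqrt ε →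
          0 < ya → 0 < yd → ya + yd < Real.sqrt ε →
          yd / ya = πd / πa →
          yd / ya < q * C * (xa + ya) / (d2 + σ2) ∧
          (d1 - b1 + C * (xa + ya) - τ * xa / (xa + ya)) / σ2 < yd / ya := by
  intro A hA
  have hxabar_ne : xabar ≠ 0 := by
    have hden : 0 < d2 + (1 - p) * σ2 := by nlinarith
    rw [hxabar]
    exact (div_pos (mul_pos (sub_pos.mpr ha1) (by linarith)) (mul_pos hC hden)).ne'
  obtain ⟨ε₀, hε₀, hbox⟩ := exists_forall_sqrt_box_of_eventually
    (eventually_invasion_criterion hxabar_ne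
      (left_eigen_ratio_lt (by linarith) hlam hπa hπd heig2)
      (lt_left_eigen_ratio hσ2 hlam hπa heig1)) hA.le
  refine ⟨ε₀, hε₀, fun ε hε hεε₀ xa ya yd hxa hya hyd hsmall hratio => ?_⟩
  rw [hratio]
  exact hbox ε hε hεε₀ xa ya hxa (by rw [abs_of_pos hya]; linarith)

/-- If `λ > 0` is an eigenvalue of `J` with positive normalized left eigenvector
`(πₐ, π_d)`, then for every `A > 0` and all sufficiently small `ε > 0`, any
configuration with `|xₐ − x̄ₐ| ≤ A√ε`, `yₐ, y_d > 0`, `yₐ + y_d < √ε` and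
`y_d/yₐ = π_d/πₐ` satisfies the invasion criterion. -/
theorem good_initial_condition_invading
    (a1 b1 d1 d2 τ C σ2 p q xabar lam πa πd : ℝ)
    (hd1 : 0 ≤ d1) (ha1 : d1 < a1) (hb1 : d1 < b1) (hd2 : 0 ≤ d2) (hτ : 0 ≤ τ)
    (hC : 0 < C) (hσ2 : 0 < σ2)
    (hp0 : 0 < p) (hp1 : p < 1) (hq0 : 0 < q) (hq1 : q < 1)
    (hxabar : xabar = (a1 - d1) * (d2 + σ2) / (C * (d2 + (1 - p) * σ2)))
    (hlam : 0 < lam)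
    (hπa : 0 < πa) (hπd : 0 < πd) (hsum : πa + πd = 1)
    (heig1 : πa * (b1 + τ - d1 - C * xabar) + πd * σ2 = lam * πa)
    (heig2 : πa * (q * C * xabar) + πd * (-(d2 + σ2)) = lam * πd) :
    ∀ A : ℝ, 0 < A → ∃ ε₀ : ℝ, 0 < ε₀ ∧
      ∀ ε : ℝ, 0 < ε → ε ≤ ε₀ →
        ∀ xa ya yd : ℝ,
          |xa - xabar| ≤ A * Real.sqrt ε →
          0 < ya → 0 < yd → ya + yd < Real.sqrt ε →
          yd / ya = πd / πa →
          yd / ya < q * C * (xa + ya) / (d2 + σ2) ∧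
          (d1 - b1 + C * (xa + ya) - τ * xa / (xa + ya)) / σ2 < yd / ya :=
  good_initial_condition_invading_general a1 b1 d1 d2 τ C σ2 p q xabar lam πa πd ha1 hd2 hC hσ2 hp1
    hxabar hlam hπa hπd heig1 heig2
end

section
/- Assume λ > 0 is an eigenvalue of J̃ admitting a left eigenvector (πₐ, π_d) with πₐ > 0, π_d > 0 and πₐ + π_d = 1. Then for every A > 0 there exists ε₀ > 0 such that for all 0 < ε ≤ ε₀ and all real numbers yₐ, xₐ, x_d with |yₐ − ȳₐ| ≤ A·√ε, xₐ > 0, x_d > 0, xₐ + x_d < √ε and x_d/xₐ = π_d/πₐ, the inequalities p·C·(xₐ + yₐ)/(d2 + σ2) > x_d/xₐ > (d1 − a1 + C(xₐ + yₐ) + τ·yₐ/(xₐ + yₐ))/σ2 hold. -/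
/-!
Write `r = π_d / πₐ`. Dividing the left-eigenvector equations by `πₐ` gives
`r σ₂ = λ + τ + d₁ - a₁ + C ȳₐ` and `r (λ + d₂ + σ₂) = p C ȳₐ`, so at the boundary equilibrium
`(xₐ, yₐ) = (0, ȳₐ)`, where `τ yₐ / (xₐ + yₐ) = τ`, both inequalities hold with slack `λ > 0`.
Both sides are continuous there because `ȳₐ > 0`, so the inequalities persist on a neighbourhood,
and the configurations allowed for small `ε` lie in a box of side `O(√ε)` around that point.
-/

open Topology

/-- `r` stands for the ratio `x_d / xₐ`. -/
def InvasionCriterion (a1 d1 d2 τ C σ2 p r xa ya : ℝ) : Prop :=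
  r < p * C * (xa + ya) / (d2 + σ2) ∧ (d1 - a1 + C * (xa + ya) + τ * ya / (xa + ya)) / σ2 < r

lemma boundary_equilibrium_pos {b1 d1 d2 C σ2 q : ℝ} (hb1 : d1 < b1) (hd2 : 0 ≤ d2)
    (hC : 0 < C) (hσ2 : 0 < σ2) (hq1 : q < 1) :
    0 < (b1 - d1) * (d2 + σ2) / (C * (d2 + (1 - q) * σ2)) := by
  have : 0 < (1 - q) * σ2 := mul_pos (by linarith) hσ2
  positivity

lemma invasionCriterion_at_boundary {a1 d1 d2 τ C σ2 p r lam yabar : ℝ}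
    (hd2 : 0 ≤ d2) (hσ2 : 0 < σ2) (hlam : 0 < lam) (hr : 0 < r) (hyabar : yabar ≠ 0)
    (heig1 : a1 - τ - d1 - C * yabar + r * σ2 = lam)
    (heig2 : p * C * yabar - r * (d2 + σ2) = lam * r) :
    InvasionCriterion a1 d1 d2 τ C σ2 p r 0 yabar := by
  have hds : 0 < d2 + σ2 := by linarith
  constructor
  · rw [zero_add, lt_div_iff₀ hds]
    nlinarith
  · rw [zero_add, mul_div_cancel_right₀ τ hyabar, div_lt_iff₀ hσ2]
    linarith

lemma InvasionCriterion.eventually_nhds {a1 d1 d2 τ C σ2 p r yabar : ℝ} (hyabar : yabar ≠ 0)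
    (h : InvasionCriterion a1 d1 d2 τ C σ2 p r 0 yabar) :
    ∀ᶠ z : ℝ × ℝ in 𝓝 (0, yabar), InvasionCriterion a1 d1 d2 τ C σ2 p r z.1 z.2 := by
  have hsum : (0, yabar).1 + (0, yabar).2 ≠ 0 := by simpa using hyabar
  refine (ContinuousAt.eventually_lt ?_ ?_ h.1).and (ContinuousAt.eventually_lt ?_ ?_ h.2) <;>
    fun_prop (disch := exact hsum)

lemma exists_sqrt_box_of_eventually_nhds {P : ℝ → ℝ → Prop} {x₀ y₀ A : ℝ} (hA : 0 ≤ A)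
    (h : ∀ᶠ z : ℝ × ℝ in 𝓝 (x₀, y₀), P z.1 z.2) :
    ∃ ε₀ : ℝ, 0 < ε₀ ∧ ∀ ε ≤ ε₀, ∀ x y : ℝ,
      |x - x₀| < Real.sqrt ε → |y - y₀| ≤ A * Real.sqrt ε → P x y := by
  obtain ⟨δ, hδ, hball⟩ := Metric.eventually_nhds_iff.mp h
  have hA1 : 0 < 1 + A := by linarith
  refine ⟨(δ / (1 + A)) ^ 2, by positivity, fun ε hε x y hx hy => hball (y := (x, y)) ?_⟩
  have hsqrt : Real.sqrt ε ≤ δ / (1 + A) :=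
    (Real.sqrt_le_sqrt hε).trans_eq (Real.sqrt_sq (by positivity))
  have hscaled : (1 + A) * Real.sqrt ε ≤ δ := (le_div_iff₀' hA1).mp hsqrt
  rw [Prod.dist_eq, Real.dist_eq, Real.dist_eq]
  exact max_lt (by nlinarith [Real.sqrt_nonneg ε]) (by nlinarith [Real.sqrt_nonneg ε])

theorem good_initial_condition_invading_reverse_general
    (a1 b1 d1 d2 τ C σ2 p q yabar lam πa πd : ℝ)
    (hb1 : d1 < b1) (hd2 : 0 ≤ d2)
    (hC : 0 < C) (hσ2 : 0 < σ2)
    (hq1 : q < 1)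
    (hyabar : yabar = (b1 - d1) * (d2 + σ2) / (C * (d2 + (1 - q) * σ2)))
    (hlam : 0 < lam)
    (hπa : 0 < πa) (hπd : 0 < πd)
    (heig1 : πa * (a1 - τ - d1 - C * yabar) + πd * σ2 = lam * πa)
    (heig2 : πa * (p * C * yabar) + πd * (-(d2 + σ2)) = lam * πd) :
    ∀ A : ℝ, 0 < A → ∃ ε₀ : ℝ, 0 < ε₀ ∧
      ∀ ε : ℝ, 0 < ε → ε ≤ ε₀ →
        ∀ ya xa xd : ℝ,
          |ya - yabar| ≤ A * Real.sqrt ε →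
          0 < xa → 0 < xd → xa + xd < Real.sqrt ε →
          xd / xa = πd / πa →
          xd / xa < p * C * (xa + ya) / (d2 + σ2) ∧
          (d1 - a1 + C * (xa + ya) + τ * ya / (xa + ya)) / σ2 < xd / xa := by
  intro A hA
  have hyabar_ne : yabar ≠ 0 := hyabar ▸ (boundary_equilibrium_pos hb1 hd2 hC hσ2 hq1).ne'
  have hπd_eq : πd = πd / πa * πa := (div_mul_cancel₀ πd hπa.ne').symm
  have heig1' : a1 - τ - d1 - C * yabar + πd / πa * σ2 = lam := by
    rw [hπd_eq] at heig1
    nlinarith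
  have heig2' : p * C * yabar - πd / πa * (d2 + σ2) = lam * (πd / πa) := by
    rw [hπd_eq] at heig2
    nlinarith
  have hcrit := (invasionCriterion_at_boundary hd2 hσ2 hlam (div_pos hπd hπa) hyabar_ne
    heig1' heig2').eventually_nhds hyabar_ne
  obtain ⟨ε₀, hε₀, hbox⟩ := exists_sqrt_box_of_eventually_nhds hA.le hcrit
  refine ⟨ε₀, hε₀, fun ε _ hε ya xa xd hya hxa hxd hsmall hratio => ?_⟩
  rw [hratio]
  exact hbox ε hε xa ya (by rw [sub_zero, abs_of_pos hxa]; linarith) hya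

/-- If `λ > 0` is an eigenvalue of `J̃` with positive normalized left eigenvector
`(πₐ, π_d)`, then for every `A > 0` and all sufficiently small `ε > 0`, any
configuration with `|yₐ − ȳₐ| ≤ A√ε`, `xₐ, x_d > 0`, `xₐ + x_d < √ε` and
`x_d/xₐ = π_d/πₐ` satisfies the (reverse) invasion criterion. -/
theorem good_initial_condition_invading_reverse
    (a1 b1 d1 d2 τ C σ2 p q yabar lam πa πd : ℝ)
    (hd1 : 0 ≤ d1) (ha1 : d1 < a1) (hb1 : d1 < b1) (hd2 : 0 ≤ d2) (hτ : 0 ≤ τ)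
    (hC : 0 < C) (hσ2 : 0 < σ2)
    (hp0 : 0 < p) (hp1 : p < 1) (hq0 : 0 < q) (hq1 : q < 1)
    (hyabar : yabar = (b1 - d1) * (d2 + σ2) / (C * (d2 + (1 - q) * σ2)))
    (hlam : 0 < lam)
    (hπa : 0 < πa) (hπd : 0 < πd) (hsum : πa + πd = 1)
    (heig1 : πa * (a1 - τ - d1 - C * yabar) + πd * σ2 = lam * πa)
    (heig2 : πa * (p * C * yabar) + πd * (-(d2 + σ2)) = lam * πd) :
    ∀ A : ℝ, 0 < A → ∃ ε₀ : ℝ, 0 < ε₀ ∧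
      ∀ ε : ℝ, 0 < ε → ε ≤ ε₀ →
        ∀ ya xa xd : ℝ,
          |ya - yabar| ≤ A * Real.sqrt ε →
          0 < xa → 0 < xd → xa + xd < Real.sqrt ε →
          xd / xa = πd / πa →
          xd / xa < p * C * (xa + ya) / (d2 + σ2) ∧
          (d1 - a1 + C * (xa + ya) + τ * ya / (xa + ya)) / σ2 < xd / xa :=
  good_initial_condition_invading_reverse_general a1 b1 d1 d2 τ C σ2 p q yabar lam πa πd hb1 hd2 hC
    hσ2 hq1 hyabar hlam hπa hπd heig1 heig2
end

section
/- Assume b1 − τ − d1 − C·x̄ₐ > 0 and −(a1 + τ − d1 − C·ȳ) > σ2·p·C·ȳ/(d2 + σ2). Then for every A > 0 there exists ε₀ ∈ (0, 1] such that for all 0 < ε ≤ ε₀ the following holds: every differentiable solution (xₐ, x_d, y) : [0, ∞) → ℝ³ of the three-dimensional competition system with reversed transfer, with all coordinates nonnegative, with y(t) > 0 and xₐ(t) + y(t) > 0 for all t ≥ 0, and with initial value in 𝒜_ε, converges to (0, 0, ȳ) as t → ∞. -/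
/-!
With `n = xₐ + y`, the region cut out by `x_d ≤ r xₐ`, `C n² + γ xₐ ≤ K n` and
`xₐ > 0` is forward invariant: on each of its faces the vector field points strictly inwards
(positivity of `xₐ` is carried by the moving barrier `xₐ ≥ xₐ(0)/2 · e^{-2Kt}`). By the fitness
assumption this holds for `r = (b1 − a1 − τ − δ)/σ2`, `γ = τ + δ`, `K = b1 − d1 + δ` with `δ > 0`
small, and the boxes `𝒜_ε` shrink to `(x̄ₐ, x̄_d, 0)`, an interior point of that region.

Inside the region the transfer terms cancel from `(xₐ/y)' = (σ2 x_d − (b1 − a1 − τ) xₐ)/y`, so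
`xₐ/y` decays like `e^{-δt}`; hence `xₐ, x_d → 0`. Then `n` solves the logistic equation
`n' = n (b1 − d1 − C n)` up to a perturbation that vanishes at infinity, and `n → ȳ`.
-/

open Filter Set Real Topology

theorem HasDerivAt.eventually_nhdsGT_lt {f : ℝ → ℝ} {f' x : ℝ} (hf : HasDerivAt f f' x)
    (hf' : f' < 0) : ∀ᶠ z in 𝓝[>] x, f z < f x := by
  filter_upwards [hf.hasDerivWithinAt.limsup_slope_le' (lt_irrefl x) hf', self_mem_nhdsWithin]
    with z hslope (hz : x < z)
  rwa [slope_def_field, div_lt_iff₀ (sub_pos.2 hz), zero_mul, sub_neg] at hslope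

theorem forall_nonpos_of_boundary {ι : Type*} [Finite ι] {f f' : ι → ℝ → ℝ} {t₀ : ℝ}
    (hf : ∀ i, ∀ t ≥ t₀, HasDerivAt (f i) (f' i t) t) (h₀ : ∀ i, f i t₀ ≤ 0)
    (hbdry : ∀ t ≥ t₀, (∀ j, f j t ≤ 0) → ∀ i, f i t = 0 → f' i t < 0) :
    ∀ t ≥ t₀, ∀ i, f i t ≤ 0 := by
  intro t₁ ht₁
  have hcont : ContinuousOn (fun t i => f i t) (Icc t₀ t₁) :=
    continuousOn_pi.2 fun i t ht => (hf i t ht.1).continuousAt.continuousWithinAt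
  have hclosed : IsClosed ({t | ∀ i, f i t ≤ 0} ∩ Icc t₀ t₁) := by
    rw [inter_comm]; exact hcont.preimage_isClosed_of_isClosed isClosed_Icc isClosed_Iic
  refine IsClosed.Icc_subset_of_forall_mem_nhdsWithin hclosed h₀ (fun t ⟨hs, ht⟩ => ?_)
    ⟨ht₁, le_rfl⟩
  refine eventually_all.2 fun i => ?_
  rcases (hs i).lt_or_eq with hneg | hzero
  · exact (((hf i t ht.1).continuousAt.eventually_lt continuousAt_const hneg).filter_mono
      nhdsWithin_le_nhds).mono fun _ => le_of_lt
  · filter_upwards [(hf i t ht.1).eventually_nhdsGT_lt (hbdry t ht.1 hs i hzero)] with z hz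
    exact (hz.trans_eq hzero).le

theorem forall_le_of_boundary {f f' : ℝ → ℝ} {t₀ a : ℝ}
    (hf : ∀ t ≥ t₀, HasDerivAt f (f' t) t) (h₀ : f t₀ ≤ a)
    (hbdry : ∀ t ≥ t₀, f t = a → f' t < 0) : ∀ t ≥ t₀, f t ≤ a := by
  intro t ht
  simpa [sub_nonpos] using forall_nonpos_of_boundary (ι := Unit) (f := fun _ t => f t - a)
    (f' := fun _ t => f' t) (fun _ t ht => (hf t ht).sub_const a) (fun _ => sub_nonpos.2 h₀)
    (fun t ht _ _ h => hbdry t ht (sub_eq_zero.1 h)) t ht ()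

theorem le_add_mul_sub_of_hasDerivAt_le {f f' : ℝ → ℝ} {T m : ℝ}
    (hf : ∀ t ≥ T, HasDerivAt f (f' t) t) (hm : ∀ t ≥ T, f' t ≤ m) :
    ∀ t ≥ T, f t ≤ f T + m * (t - T) := by
  intro t ht
  have hB : ∀ x, HasDerivAt (fun x => f T + m * (x - T)) m x := fun x => by
    simpa using (((hasDerivAt_id x).sub_const T).const_mul m).const_add (f T)
  exact image_le_of_deriv_right_le_deriv_boundary (a := T) (b := t)
    (fun x hx => (hf x hx.1).continuousAt.continuousWithinAt)
    (fun x hx => (hf x hx.1).hasDerivWithinAt) (by simp)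
    (fun x _ => (hB x).continuousAt.continuousWithinAt) (fun x _ => (hB x).hasDerivWithinAt)
    (fun x hx => hm x hx.1) ⟨ht, le_rfl⟩

theorem le_mul_exp_of_hasDerivAt_le_mul_s16 {u u' : ℝ → ℝ} {k : ℝ}
    (hu : ∀ t ≥ 0, HasDerivAt u (u' t) t) (hk : ∀ t ≥ 0, u' t ≤ k * u t) :
    ∀ t ≥ 0, u t ≤ u 0 * exp (k * t) := by
  intro t ht
  simpa [gronwallBound_ε0] using
    le_gronwallBound_of_liminf_deriv_right_le (a := 0) (b := t) (K := k) (ε := 0)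
      (fun x hx => (hu x hx.1).continuousAt.continuousWithinAt)
      (fun x hx r hr => (hu x hx.1).hasDerivWithinAt.liminf_right_slope_le hr) le_rfl
      (fun x hx => by simpa using hk x hx.1) t ⟨ht, le_rfl⟩

theorem eventually_le_of_hasDerivAt_le_neg {f f' : ℝ → ℝ} {a δ m : ℝ} (hδ : 0 < δ)
    (hf : ∀ᶠ t in atTop, HasDerivAt f (f' t) t) (hm : ∀ᶠ t in atTop, m ≤ f t)
    (hdec : ∀ᶠ t in atTop, a ≤ f t → f' t ≤ -δ) : ∀ᶠ t in atTop, f t ≤ a := by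
  obtain ⟨T, hT⟩ := eventually_atTop.1 (hf.and (hm.and hdec))
  obtain ⟨t₁, ht₁, hft₁⟩ : ∃ t₁ ≥ T, f t₁ ≤ a := by
    by_contra! hgt
    have hlin := le_add_mul_sub_of_hasDerivAt_le (fun t ht => (hT t ht).1)
      fun t ht => (hT t ht).2.2 (hgt t ht).le
    -- by this time the linear bound has dropped below `m`
    set t := T + (f T - m + 1) / δ
    have hTt : T ≤ t :=
      le_add_of_nonneg_right (div_nonneg (by linarith [(hT T le_rfl).2.1]) hδ.le)
    have hdrop : -δ * (t - T) = -(f T - m + 1) := by simp only [t]; field_simp; ring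
    linarith [hlin t hTt, (hT t hTt).2.1]
  refine eventually_atTop.2 ⟨t₁, forall_le_of_boundary (fun t ht => (hT t (ht₁.trans ht)).1)
    hft₁ fun t ht hfa => ?_⟩
  linarith [(hT t (ht₁.trans ht)).2.2 hfa.ge]

theorem tendsto_of_hasDerivAt_logistic {n n' e : ℝ → ℝ} {b C c M : ℝ} (hC : 0 < C)
    (hc : 0 < c) (hn : ∀ t ≥ 0, HasDerivAt n (n' t) t) (hlow : ∀ t ≥ 0, c ≤ n t)
    (hup : ∀ t ≥ 0, n t ≤ M) (he : Tendsto e atTop (𝓝 0))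
    (hn' : ∀ t ≥ 0, |n' t - n t * (b - C * n t)| ≤ e t) :
    Tendsto n atTop (𝓝 (b / C)) := by
  have hpos : ∀ᶠ t : ℝ in atTop, 0 ≤ t := eventually_ge_atTop 0
  have hCb : C * (b / C) = b := mul_div_cancel₀ b hC.ne'
  refine tendsto_order.2 ⟨fun a ha => ?_, fun a ha => ?_⟩
  · set a' := (a + b / C) / 2
    have hgap : 0 < b - C * a' := by
      rw [sub_pos, ← hCb]; gcongr; simp only [a']; linarith
    have hδ : 0 < c * (b - C * a') / 2 := by positivity
    have hev := eventually_le_of_hasDerivAt_le_neg (f := fun t => -n t) (f' := fun t => -n' t)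
      (a := -a') (m := -M) hδ (hpos.mono fun t ht => (hn t ht).neg)
      (hpos.mono fun t ht => neg_le_neg (hup t ht))
      ((hpos.and (he.eventually (gt_mem_nhds hδ))).mono fun t ⟨ht, het⟩ hna => ?_)
    · filter_upwards [hev] with t ht
      simp only [a'] at ht; linarith
    · have hCn : C * n t ≤ C * a' := mul_le_mul_of_nonneg_left (by linarith) hC.le
      have hprod : c * (b - C * a') ≤ n t * (b - C * n t) :=
        mul_le_mul (hlow t ht) (by linarith) hgap.le (hc.le.trans (hlow t ht))
      linarith [(abs_le.1 (hn' t ht)).1]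
  · set a' := (a + b / C) / 2
    have hgap : 0 < C * a' - b := by
      rw [sub_pos, ← hCb]; gcongr; simp only [a']; linarith
    have hδ : 0 < c * (C * a' - b) / 2 := by positivity
    have hev := eventually_le_of_hasDerivAt_le_neg (f := n) (a := a') (m := c) hδ
      (hpos.mono hn) (hpos.mono hlow)
      ((hpos.and (he.eventually (gt_mem_nhds hδ))).mono fun t ⟨ht, het⟩ hna => ?_)
    · filter_upwards [hev] with t ht
      simp only [a'] at ht; linarith
    · have hCn : C * a' ≤ C * n t := mul_le_mul_of_nonneg_left hna hC.le
      have hprod : n t * (b - C * n t) ≤ c * (b - C * a') := calc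
        n t * (b - C * n t) ≤ c * (b - C * n t) :=
          mul_le_mul_of_nonpos_right (hlow t ht) (by linarith)
        _ ≤ c * (b - C * a') := mul_le_mul_of_nonneg_left (by linarith) hc.le
      linarith [(abs_le.1 (hn' t ht)).2]

theorem exists_box_subset {U : Set (ℝ × ℝ × ℝ)} (hU : IsOpen U) {q : ℝ × ℝ × ℝ} (hq : q ∈ U)
    {A : ℝ} (hA : 0 < A) : ∃ ε₀ : ℝ, 0 < ε₀ ∧ ε₀ ≤ 1 ∧ ∀ ε : ℝ, 0 < ε → ε ≤ ε₀ →
      ∀ x : ℝ × ℝ × ℝ, |x.1 - q.1| ≤ 2 * A * √ε → |x.2.1 - q.2.1| ≤ 2 * A * √ε →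
        |x.2.2 - q.2.2| ≤ √ε → x ∈ U := by
  obtain ⟨r, hr, hball⟩ := Metric.isOpen_iff.1 hU q hq
  have hs : 0 < r / (2 * A + 2) := by positivity
  refine ⟨min 1 ((r / (2 * A + 2)) ^ 2), lt_min one_pos (by positivity), min_le_left _ _,
    fun ε hε hεε₀ x h₁ h₂ h₃ => hball ?_⟩
  have hsqrt : √ε ≤ r / (2 * A + 2) :=
    (sqrt_le_sqrt (hεε₀.trans (min_le_right _ _))).trans_eq (sqrt_sq hs.le)
  have hbox : (2 * A + 1) * √ε < r :=
    calc (2 * A + 1) * √ε ≤ (2 * A + 1) * (r / (2 * A + 2)) := by gcongr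
      _ < r := by rw [mul_div_assoc', div_lt_iff₀ (by positivity)]; linarith
  have h₀ := sqrt_nonneg ε
  have hA₀ := mul_nonneg hA.le h₀
  rw [Metric.mem_ball, Prod.dist_eq, Prod.dist_eq, Real.dist_eq, Real.dist_eq, Real.dist_eq]
  exact max_lt (by linarith) (max_lt (by linarith) (by linarith))

section System

variable (a1 b1 d1 d2 τ C σ2 p : ℝ)

noncomputable def fieldA (X XD Y : ℝ) : ℝ :=
  X * (a1 - d1 - C * (X + Y)) + σ2 * XD + τ * X * Y / (X + Y)

def fieldD (X XD Y : ℝ) : ℝ := p * C * X * (X + Y) - (d2 + σ2) * XD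

noncomputable def fieldY (X Y : ℝ) : ℝ := Y * (b1 - d1 - C * (X + Y)) - τ * X * Y / (X + Y)

structure IsSolution (xa xd y : ℝ → ℝ) : Prop where
  hasDerivAt_xa : ∀ t ≥ 0, HasDerivAt xa (fieldA a1 d1 τ C σ2 (xa t) (xd t) (y t)) t
  hasDerivAt_xd : ∀ t ≥ 0, HasDerivAt xd (fieldD d2 C σ2 p (xa t) (xd t) (y t)) t
  hasDerivAt_y : ∀ t ≥ 0, HasDerivAt y (fieldY b1 d1 τ C (xa t) (y t)) t
  xd_nonneg : ∀ t ≥ 0, 0 ≤ xd t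
  y_pos : ∀ t ≥ 0, 0 < y t

/-- `face_y` and `face_xa` make `x_d − r xₐ` decrease on its zero set inside the region, in the
two extreme regimes `xₐ ≪ y` and `y = 0`. -/
structure TrapConditions (r γ K : ℝ) : Prop where
  lt_γ : τ < γ
  add_eq : γ + σ2 * r = b1 - a1
  lt_K : b1 - d1 < K
  add_nonneg : 0 ≤ p + r
  face_y : (p + r) * K < r * (d2 + σ2 + (a1 - d1) + σ2 * r + τ)
  face_xa : (p + r) * (K - γ) < r * (d2 + σ2 + (a1 - d1) + σ2 * r)

def TrapRegion (r γ K X XD Y : ℝ) : Prop :=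
  0 < X ∧ XD ≤ r * X ∧ C * (X + Y) ^ 2 + γ * X ≤ K * (X + Y)

def trapInterior (r γ K : ℝ) : Set (ℝ × ℝ × ℝ) :=
  {q | 0 < q.1 ∧ q.2.1 < r * q.1 ∧ C * (q.1 + q.2.2) ^ 2 + γ * q.1 < K * (q.1 + q.2.2)}

variable {a1 b1 d1 d2 τ C σ2 p}

theorem fieldA_add_fieldY (X XD Y : ℝ) :
    fieldA a1 d1 τ C σ2 X XD Y + fieldY b1 d1 τ C X Y
      = X * (a1 - d1 - C * (X + Y)) + Y * (b1 - d1 - C * (X + Y)) + σ2 * XD := by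
  unfold fieldA fieldY; ring

theorem mul_fieldA_sub_mul_fieldY {X Y : ℝ} (XD : ℝ) (h : X + Y ≠ 0) :
    Y * fieldA a1 d1 τ C σ2 X XD Y - X * fieldY b1 d1 τ C X Y
      = Y * (σ2 * XD - (b1 - a1 - τ) * X) := by
  unfold fieldA fieldY; field_simp; ring

theorem neg_mul_le_fieldA {K X XD Y : ℝ} (hX : 0 ≤ X) (hXD : 0 ≤ XD) (hY : 0 ≤ Y)
    (hσ2 : 0 ≤ σ2) (hτ : 0 ≤ τ) (ha : d1 ≤ a1) (hCN : C * (X + Y) ≤ K) :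
    -(K * X) ≤ fieldA a1 d1 τ C σ2 X XD Y := by
  have h1 : -(K * X) ≤ X * (a1 - d1 - C * (X + Y)) := by nlinarith
  have h2 : 0 ≤ τ * X * Y / (X + Y) := by positivity
  unfold fieldA; nlinarith [mul_nonneg hσ2 hXD]

theorem TrapRegion.mul_add_le {r γ K X XD Y : ℝ} (h : TrapRegion C r γ K X XD Y)
    (hγ : 0 ≤ γ) (hY : 0 ≤ Y) : C * (X + Y) ≤ K := by
  obtain ⟨hX, -, hN⟩ := h
  have hγX : 0 ≤ γ * X := mul_nonneg hγ hX.le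
  exact le_of_mul_le_mul_right (by nlinarith) (by linarith : 0 < X + Y)

theorem isOpen_trapInterior (r γ K : ℝ) : IsOpen (trapInterior C r γ K) :=
  (isOpen_lt continuous_const continuous_fst).inter
    ((isOpen_lt (f := fun q : ℝ × ℝ × ℝ => q.2.1) (by fun_prop) (by fun_prop)).inter
      (isOpen_lt (f := fun q : ℝ × ℝ × ℝ => C * (q.1 + q.2.2) ^ 2 + γ * q.1)
        (by fun_prop) (by fun_prop)))

theorem trapRegion_of_mem_trapInterior {r γ K X XD Y : ℝ}
    (h : (X, XD, Y) ∈ trapInterior C r γ K) : TrapRegion C r γ K X XD Y :=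
  ⟨h.1, h.2.1.le, h.2.2.le⟩

section Faces

variable {r γ K X XD Y : ℝ} (hR : TrapConditions a1 b1 d1 d2 τ σ2 p r γ K)
include hR

theorem TrapConditions.fieldD_sub_mul_fieldA_neg (hX : 0 < X) (hY : 0 ≤ Y)
    (hN : C * (X + Y) ^ 2 + γ * X ≤ K * (X + Y)) :
    fieldD d2 C σ2 p X (r * X) Y - r * fieldA a1 d1 τ C σ2 X (r * X) Y < 0 := by
  have hN0 : 0 < X + Y := by linarith
  have key : (fieldD d2 C σ2 p X (r * X) Y - r * fieldA a1 d1 τ C σ2 X (r * X) Y) * (X + Y)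
      = X * ((p + r) * (C * (X + Y) ^ 2)
        - r * (d2 + σ2 + (a1 - d1) + σ2 * r) * (X + Y) - r * τ * Y) := by
    unfold fieldD fieldA; field_simp; ring
  -- bound `C n²` by `K n − γ X` and split `n = X + Y`
  have hbracket : (p + r) * (C * (X + Y) ^ 2)
      - r * (d2 + σ2 + (a1 - d1) + σ2 * r) * (X + Y) - r * τ * Y
      ≤ Y * ((p + r) * K - r * (d2 + σ2 + (a1 - d1) + σ2 * r + τ))
        + X * ((p + r) * (K - γ) - r * (d2 + σ2 + (a1 - d1) + σ2 * r)) := by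
    nlinarith [mul_le_mul_of_nonneg_left hN hR.add_nonneg]
  have hY' := mul_nonpos_of_nonneg_of_nonpos hY (sub_neg.2 hR.face_y).le
  have hX' := mul_neg_of_pos_of_neg hX (sub_neg.2 hR.face_xa)
  exact neg_of_mul_neg_left (key ▸ mul_neg_of_pos_of_neg hX (by linarith)) hN0.le

theorem TrapConditions.populationBarrier_deriv_neg (hC : 0 < C) (hX : 0 ≤ X) (hY : 0 ≤ Y)
    (hN0 : 0 < X + Y) (hXD : XD ≤ r * X) (hσ2 : 0 ≤ σ2) (hτ : 0 ≤ τ)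
    (hN : C * (X + Y) ^ 2 + γ * X = K * (X + Y)) :
    (2 * C * (X + Y) - K) * (fieldA a1 d1 τ C σ2 X XD Y + fieldY b1 d1 τ C X Y)
      + γ * fieldA a1 d1 τ C σ2 X XD Y < 0 := by
  set S := fieldA a1 d1 τ C σ2 X XD Y + fieldY b1 d1 τ C X Y with hS_def
  have key : ((2 * C * (X + Y) - K) * S + γ * fieldA a1 d1 τ C σ2 X XD Y) * (X + Y)
      = C * (X + Y) ^ 2 * S
        + γ * (Y * fieldA a1 d1 τ C σ2 X XD Y - X * fieldY b1 d1 τ C X Y) := by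
    linear_combination S * hN
  have hS : S ≤ (b1 - d1 - K) * (X + Y) := by
    rw [hS_def, fieldA_add_fieldY]
    nlinarith [hR.add_eq, mul_le_mul_of_nonneg_left hXD hσ2]
  have hcross : Y * fieldA a1 d1 τ C σ2 X XD Y - X * fieldY b1 d1 τ C X Y ≤ 0 := by
    rw [mul_fieldA_sub_mul_fieldY XD hN0.ne']
    refine mul_nonpos_of_nonneg_of_nonpos hY ?_
    nlinarith [hR.add_eq, hR.lt_γ, mul_le_mul_of_nonneg_left hXD hσ2]
  have hfirst : C * (X + Y) ^ 2 * S < 0 :=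
    mul_neg_of_pos_of_neg (by positivity)
      (hS.trans_lt (mul_neg_of_neg_of_pos (by linarith [hR.lt_K]) hN0))
  have hγcross := mul_nonpos_of_nonneg_of_nonpos (hτ.trans hR.lt_γ.le) hcross
  exact neg_of_mul_neg_left (key ▸ (by linarith)) hN0.le

end Faces

theorem IsSolution.trapRegion {xa xd y : ℝ → ℝ} {r γ K : ℝ}
    (hs : IsSolution a1 b1 d1 d2 τ C σ2 p xa xd y)
    (hR : TrapConditions a1 b1 d1 d2 τ σ2 p r γ K)
    (hC : 0 < C) (hσ2 : 0 ≤ σ2) (hτ : 0 ≤ τ) (ha : d1 ≤ a1) (hb : d1 < b1)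
    (h0 : TrapRegion C r γ K (xa 0) (xd 0) (y 0)) :
    ∀ t ≥ 0, TrapRegion C r γ K (xa t) (xd t) (y t) := by
  have hK : 0 < K := by linarith [hR.lt_K]
  have hγ : 0 ≤ γ := hτ.trans hR.lt_γ.le
  let f : Fin 3 → ℝ → ℝ := ![fun t => xd t - r * xa t,
    fun t => C * (xa t + y t) ^ 2 + γ * xa t - K * (xa t + y t),
    fun t => xa 0 / 2 * exp (-(2 * K) * t) - xa t]
  let f' : Fin 3 → ℝ → ℝ := ![
    fun t => fieldD d2 C σ2 p (xa t) (xd t) (y t) - r * fieldA a1 d1 τ C σ2 (xa t) (xd t) (y t),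
    fun t => (2 * C * (xa t + y t) - K) * (fieldA a1 d1 τ C σ2 (xa t) (xd t) (y t)
      + fieldY b1 d1 τ C (xa t) (y t)) + γ * fieldA a1 d1 τ C σ2 (xa t) (xd t) (y t),
    fun t => xa 0 / 2 * (exp (-(2 * K) * t) * (-(2 * K)))
      - fieldA a1 d1 τ C σ2 (xa t) (xd t) (y t)]
  have hreg : ∀ t ≥ 0, (∀ i, f i t ≤ 0) → TrapRegion C r γ K (xa t) (xd t) (y t) := by
    intro t ht h
    have h₀ := h 0; have h₁ := h 1; have h₂ := h 2
    simp only [f, Matrix.cons_val] at h₀ h₁ h₂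
    have := mul_pos (half_pos h0.1) (exp_pos (-(2 * K) * t))
    exact ⟨by linarith, by linarith, by linarith⟩
  have hf : ∀ i, ∀ t ≥ 0, HasDerivAt (f i) (f' i t) t := by
    intro i t ht
    have hxa := hs.hasDerivAt_xa t ht
    have hn := hxa.add (hs.hasDerivAt_y t ht)
    fin_cases i
    · exact (hs.hasDerivAt_xd t ht).sub (hxa.const_mul r)
    · exact ((((hn.pow 2).const_mul C).add (hxa.const_mul γ)).sub
        (hn.const_mul K)).congr_deriv
          (by simp only [f', Fin.mk_one, Matrix.cons_val, Pi.add_apply]; ring)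
    · exact ((((hasDerivAt_id' t).const_mul (-(2 * K))).exp.const_mul (xa 0 / 2)).sub
        hxa).congr_deriv (by simp only [f', Fin.reduceFinMk, Matrix.cons_val]; ring)
  refine fun t ht => hreg t ht (forall_nonpos_of_boundary hf (fun i => ?_)
    (fun t ht hall i hi => ?_) t ht)
  · fin_cases i <;> simp only [f, Fin.zero_eta, Fin.mk_one, Fin.reduceFinMk, Matrix.cons_val]
      <;> norm_num
    · linarith [h0.2.1]
    · linarith [h0.2.2]
    · linarith [h0.1]
  · obtain ⟨hX, hXD, hN⟩ := hreg t ht hall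
    have hY := (hs.y_pos t ht).le
    fin_cases i <;>
      simp only [f, f', Fin.zero_eta, Fin.mk_one, Fin.reduceFinMk, Matrix.cons_val] at hi ⊢
    · rw [show xd t = r * xa t by linarith]
      exact hR.fieldD_sub_mul_fieldA_neg hX hY hN
    · exact hR.populationBarrier_deriv_neg hC hX.le hY (by linarith) hXD hσ2 hτ (by linarith)
    · have hCN := TrapRegion.mul_add_le ⟨hX, hXD, hN⟩ hγ hY
      have := neg_mul_le_fieldA hX.le (hs.xd_nonneg t ht) hY hσ2 hτ ha hCN
      have hxa_eq : xa 0 / 2 * exp (-(2 * K) * t) = xa t := by linarith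
      nlinarith [mul_pos hK hX]

theorem IsSolution.tendsto_xa_zero {xa xd y : ℝ → ℝ} {r γ K : ℝ}
    (hs : IsSolution a1 b1 d1 d2 τ C σ2 p xa xd y)
    (hR : TrapConditions a1 b1 d1 d2 τ σ2 p r γ K) (hC : 0 < C) (hσ2 : 0 ≤ σ2) (hτ : 0 ≤ τ)
    (hreg : ∀ t ≥ 0, TrapRegion C r γ K (xa t) (xd t) (y t)) :
    Tendsto xa atTop (𝓝 0) := by
  have hγ : 0 ≤ γ := hτ.trans hR.lt_γ.le
  have hu : ∀ t ≥ 0, HasDerivAt (fun t => xa t / y t)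
      ((fieldA a1 d1 τ C σ2 (xa t) (xd t) (y t) * y t
        - xa t * fieldY b1 d1 τ C (xa t) (y t)) / y t ^ 2) t :=
    fun t ht => (hs.hasDerivAt_xa t ht).div (hs.hasDerivAt_y t ht) (hs.y_pos t ht).ne'
  have hu' : ∀ t ≥ 0, (fieldA a1 d1 τ C σ2 (xa t) (xd t) (y t) * y t
      - xa t * fieldY b1 d1 τ C (xa t) (y t)) / y t ^ 2 ≤ -(γ - τ) * (xa t / y t) := by
    intro t ht
    obtain ⟨hX, hXD, -⟩ := hreg t ht
    have hY := hs.y_pos t ht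
    have hrate : σ2 * xd t - (b1 - a1 - τ) * xa t ≤ -(γ - τ) * xa t := by
      nlinarith [hR.add_eq, mul_le_mul_of_nonneg_left hXD hσ2]
    rw [mul_comm _ (y t), mul_fieldA_sub_mul_fieldY _ (by linarith : 0 < xa t + y t).ne', sq,
      mul_div_mul_left _ _ hY.ne', ← mul_div_assoc]
    exact div_le_div_of_nonneg_right hrate hY.le
  have hbound : ∀ t ≥ 0, xa t ≤ xa 0 / y 0 * exp (-(γ - τ) * t) * (K / C) := by
    intro t ht
    have hY := hs.y_pos t ht
    have hyK : y t ≤ K / C := by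
      rw [le_div_iff₀ hC]; nlinarith [(hreg t ht).mul_add_le hγ hY.le, (hreg t ht).1]
    calc xa t = xa t / y t * y t := (div_mul_cancel₀ _ hY.ne').symm
      _ ≤ xa 0 / y 0 * exp (-(γ - τ) * t) * (K / C) :=
        mul_le_mul (le_mul_exp_of_hasDerivAt_le_mul_s16 hu hu' t ht) hyK hY.le
          (by have := (hreg 0 le_rfl).1; have := hs.y_pos 0 le_rfl; positivity)
  have hexp : Tendsto (fun t => xa 0 / y 0 * exp (-(γ - τ) * t) * (K / C)) atTop (𝓝 0) := by
    simpa using ((tendsto_exp_atBot.comp (tendsto_id.const_mul_atTop_of_neg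
      (by linarith [hR.lt_γ] : -(γ - τ) < 0))).const_mul (xa 0 / y 0)).mul_const (K / C)
  exact tendsto_of_tendsto_of_tendsto_of_le_of_le' tendsto_const_nhds hexp
    ((eventually_ge_atTop 0).mono fun t ht => (hreg t ht).1.le)
    ((eventually_ge_atTop 0).mono hbound)

theorem IsSolution.exists_pos_le_add {xa xd y : ℝ → ℝ}
    (hs : IsSolution a1 b1 d1 d2 τ C σ2 p xa xd y) (hxa : ∀ t ≥ 0, 0 ≤ xa t) (hσ2 : 0 ≤ σ2)
    (hC : 0 < C) (ha : d1 < a1) (hb : d1 < b1) : ∃ c > 0, ∀ t ≥ 0, c ≤ xa t + y t := by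
  set m := min (a1 - d1) (b1 - d1)
  have hm : 0 < m := lt_min (by linarith) (by linarith)
  set c := min (xa 0 + y 0) (m / (2 * C))
  have hc : 0 < c := lt_min (by linarith [hxa 0 le_rfl, hs.y_pos 0 le_rfl]) (by positivity)
  refine ⟨c, hc, fun t ht => ?_⟩
  have := forall_le_of_boundary (f := fun t => -(xa t + y t)) (a := -c)
    (fun t ht => ((hs.hasDerivAt_xa t ht).add (hs.hasDerivAt_y t ht)).neg)
    (neg_le_neg (min_le_left _ _)) (fun t ht hN => ?_) t ht
  · linarith
  · rw [fieldA_add_fieldY, show xa t + y t = c by linarith]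
    have hCc : C * c ≤ m / 2 := by
      have := (le_div_iff₀ (by positivity : (0 : ℝ) < 2 * C)).1 (min_le_right _ _ : c ≤ _)
      linarith
    have h1 : m / 2 * xa t ≤ xa t * (a1 - d1 - C * c) := by
      nlinarith [hxa t ht, min_le_left (a1 - d1) (b1 - d1)]
    have h2 : m / 2 * y t ≤ y t * (b1 - d1 - C * c) := by
      nlinarith [(hs.y_pos t ht).le, min_le_right (a1 - d1) (b1 - d1)]
    nlinarith [mul_nonneg hσ2 (hs.xd_nonneg t ht)]

theorem IsSolution.tendsto {xa xd y : ℝ → ℝ} {r γ K : ℝ}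
    (hs : IsSolution a1 b1 d1 d2 τ C σ2 p xa xd y)
    (hR : TrapConditions a1 b1 d1 d2 τ σ2 p r γ K)
    (hC : 0 < C) (hσ2 : 0 ≤ σ2) (hτ : 0 ≤ τ) (ha : d1 < a1) (hb : d1 < b1)
    (h0 : TrapRegion C r γ K (xa 0) (xd 0) (y 0)) :
    Tendsto (fun t => (xa t, xd t, y t)) atTop (𝓝 (0, 0, (b1 - d1) / C)) := by
  have hreg := hs.trapRegion hR hC hσ2 hτ ha.le hb h0
  have hγ : 0 ≤ γ := hτ.trans hR.lt_γ.le
  have hxa := hs.tendsto_xa_zero hR hC hσ2 hτ hreg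
  have hxd : Tendsto xd atTop (𝓝 0) :=
    tendsto_of_tendsto_of_tendsto_of_le_of_le' tendsto_const_nhds
      (by simpa using hxa.const_mul r) ((eventually_ge_atTop 0).mono hs.xd_nonneg)
      ((eventually_ge_atTop 0).mono fun t ht => (hreg t ht).2.1)
  obtain ⟨c, hc, hlow⟩ := hs.exists_pos_le_add (fun t ht => (hreg t ht).1.le) hσ2 hC ha hb
  have hn : Tendsto (fun t => xa t + y t) atTop (𝓝 ((b1 - d1) / C)) := by
    refine tendsto_of_hasDerivAt_logistic (M := K / C)
      (e := fun t => σ2 * xd t + |b1 - a1| * xa t) hC hc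
      (fun t ht => (hs.hasDerivAt_xa t ht).add (hs.hasDerivAt_y t ht)) hlow (fun t ht => ?_) ?_
      (fun t ht => ?_)
    · rw [le_div_iff₀ hC]
      linarith [(hreg t ht).mul_add_le hγ (hs.y_pos t ht).le]
    · simpa using (hxd.const_mul σ2).add (hxa.const_mul |b1 - a1|)
    · rw [fieldA_add_fieldY]
      calc _ = |σ2 * xd t - (b1 - a1) * xa t| := by congr 1; ring
        _ ≤ |σ2 * xd t| + |(b1 - a1) * xa t| := abs_sub _ _
        _ = σ2 * xd t + |b1 - a1| * xa t := by
          rw [abs_of_nonneg (mul_nonneg hσ2 (hs.xd_nonneg t ht)), abs_mul,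
            abs_of_pos (hreg t ht).1]
  have hy : Tendsto y atTop (𝓝 ((b1 - d1) / C)) := by simpa using hn.sub hxa
  exact hxa.prodMk_nhds (hxd.prodMk_nhds hy)

theorem eventually_trapConditions (hσ2 : 0 < σ2) (hp : 0 < p) (hd2 : 0 ≤ d2) (hτ : 0 ≤ τ)
    (hb : d1 < b1) (hfit : p * σ2 * (b1 - d1) < (b1 - a1 - τ) * (d2 + σ2)) :
    ∀ᶠ δ in 𝓝[>] 0,
      TrapConditions a1 b1 d1 d2 τ σ2 p ((b1 - a1 - τ - δ) / σ2) (τ + δ) (b1 - d1 + δ) := by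
  have hbe : 0 < b1 - a1 - τ := by
    have : 0 < p * σ2 * (b1 - d1) := by have := sub_pos.2 hb; positivity
    exact pos_of_mul_pos_left (this.trans hfit) (by linarith)
  -- at `δ = 0` the face conditions reduce to `hfit`, so they persist for small `δ`
  have hnonneg : ∀ᶠ δ in 𝓝 (0 : ℝ), 0 < p + (b1 - a1 - τ - δ) / σ2 :=
    ContinuousAt.eventually_lt (by fun_prop) (by fun_prop) (by simp only [sub_zero]; positivity)
  have hface_y : ∀ᶠ δ in 𝓝 (0 : ℝ), (p + (b1 - a1 - τ - δ) / σ2) * (b1 - d1 + δ)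
      < (b1 - a1 - τ - δ) / σ2
        * (d2 + σ2 + (a1 - d1) + σ2 * ((b1 - a1 - τ - δ) / σ2) + τ) := by
    refine ContinuousAt.eventually_lt (by fun_prop) (by fun_prop) ?_
    simp only [sub_zero, add_zero]
    field_simp
    nlinarith
  have hface_xa : ∀ᶠ δ in 𝓝 (0 : ℝ), (p + (b1 - a1 - τ - δ) / σ2) * (b1 - d1 + δ - (τ + δ))
      < (b1 - a1 - τ - δ) / σ2 * (d2 + σ2 + (a1 - d1) + σ2 * ((b1 - a1 - τ - δ) / σ2)) := by
    refine ContinuousAt.eventually_lt (by fun_prop) (by fun_prop) ?_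
    simp only [sub_zero, add_zero]
    field_simp
    nlinarith [mul_nonneg (mul_nonneg hp.le hσ2.le) hτ]
  filter_upwards [self_mem_nhdsWithin, nhdsWithin_le_nhds (hnonneg.and (hface_y.and hface_xa))]
    with δ (hδ : 0 < δ) ⟨h₁, h₂, h₃⟩
  exact ⟨by linarith, by field_simp; ring, by linarith, h₁.le, h₂, h₃⟩

theorem eventually_mem_trapInterior {xabar xdbar : ℝ} (hσ2 : 0 < σ2) (hp : 0 < p)
    (hp1 : p < 1) (hd2 : 0 ≤ d2) (hτ : 0 ≤ τ) (hC : 0 < C) (ha : d1 < a1)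
    (hxabar : xabar = (a1 - d1) * (d2 + σ2) / (C * (d2 + (1 - p) * σ2)))
    (hxdbar : xdbar = p * (a1 - d1) ^ 2 * (d2 + σ2) / (C * (d2 + (1 - p) * σ2) ^ 2))
    (hfit : p * σ2 * (b1 - d1) < (b1 - a1 - τ) * (d2 + σ2)) :
    ∀ᶠ δ in 𝓝 0,
      (xabar, xdbar, 0) ∈ trapInterior C ((b1 - a1 - τ - δ) / σ2) (τ + δ) (b1 - d1 + δ) := by
  have hDq : 0 < d2 + (1 - p) * σ2 := by nlinarith
  have hal := sub_pos.2 ha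
  have hkey : σ2 * p * (a1 - d1) < (b1 - a1 - τ) * (d2 + (1 - p) * σ2) := by
    nlinarith [mul_nonneg (mul_nonneg hp.le hσ2.le) hτ]
  have hxa : 0 < xabar := by rw [hxabar]; positivity
  have hxd : xdbar = p * (a1 - d1) / (d2 + (1 - p) * σ2) * xabar := by
    rw [hxdbar, hxabar]; field_simp
  have hCxa : C * xabar + τ < b1 - d1 := by
    rw [hxabar, mul_div_assoc', mul_div_mul_left _ _ hC.ne', ← lt_sub_iff_add_lt,
      div_lt_iff₀ hDq]
    nlinarith
  have hxd_lt : ∀ᶠ δ in 𝓝 (0 : ℝ), xdbar < (b1 - a1 - τ - δ) / σ2 * xabar := by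
    refine ContinuousAt.eventually_lt (by fun_prop) (by fun_prop) ?_
    rw [hxd, sub_zero]
    refine mul_lt_mul_of_pos_right ?_ hxa
    rw [div_lt_div_iff₀ hDq hσ2]
    linarith
  filter_upwards [hxd_lt] with δ hδ
  refine ⟨hxa, hδ, ?_⟩
  simp only [add_zero]
  nlinarith

end System

theorem three_dim_competition_convergence_reversed_transfer_general
    (a1 b1 d1 d2 τ C σ2 p xabar xdbar ybar : ℝ)
    (ha1 : d1 < a1) (hb1 : d1 < b1) (hd2 : 0 ≤ d2) (hτ : 0 ≤ τ)
    (hC : 0 < C) (hσ2 : 0 < σ2) (hp0 : 0 < p) (hp1 : p < 1)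
    (hxabar : xabar = (a1 - d1) * (d2 + σ2) / (C * (d2 + (1 - p) * σ2)))
    (hxdbar : xdbar = p * (a1 - d1) ^ 2 * (d2 + σ2) / (C * (d2 + (1 - p) * σ2) ^ 2))
    (hybar : ybar = (b1 - d1) / C)
    (hfitX : σ2 * p * C * ybar / (d2 + σ2) < -(a1 + τ - d1 - C * ybar)) :
    ∀ A : ℝ, 0 < A → ∃ ε₀ : ℝ, 0 < ε₀ ∧ ε₀ ≤ 1 ∧
      ∀ ε : ℝ, 0 < ε → ε ≤ ε₀ →
        ∀ xa xd y : ℝ → ℝ,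
          (∀ t, 0 ≤ t → HasDerivAt xa
            (xa t * (a1 - d1 - C * (xa t + y t)) + σ2 * xd t
              + τ * xa t * y t / (xa t + y t)) t) →
          (∀ t, 0 ≤ t → HasDerivAt xd
            (p * C * xa t * (xa t + y t) - (d2 + σ2) * xd t) t) →
          (∀ t, 0 ≤ t → HasDerivAt y
            (y t * (b1 - d1 - C * (xa t + y t))
              - τ * xa t * y t / (xa t + y t)) t) →
          (∀ t, 0 ≤ t → 0 ≤ xa t ∧ 0 ≤ xd t ∧ 0 ≤ y t) →
          (∀ t, 0 ≤ t → 0 < y t ∧ 0 < xa t + y t) →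
          xabar - 2 * A * Real.sqrt ε ≤ xa 0 → xa 0 ≤ xabar + 2 * A * Real.sqrt ε →
          xdbar - 2 * A * Real.sqrt ε ≤ xd 0 → xd 0 ≤ xdbar + 2 * A * Real.sqrt ε →
          ε ≤ y 0 → y 0 ≤ Real.sqrt ε →
          Filter.Tendsto (fun t => (xa t, xd t, y t)) Filter.atTop
            (nhds ((0 : ℝ), (0 : ℝ), ybar)) := by
  have hfit : p * σ2 * (b1 - d1) < (b1 - a1 - τ) * (d2 + σ2) := by
    have hCy : C * ybar = b1 - d1 := by rw [hybar, mul_div_cancel₀ _ hC.ne']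
    rw [div_lt_iff₀ (by linarith), mul_assoc (σ2 * p), hCy] at hfitX
    linarith
  obtain ⟨δ, hR, hq⟩ := ((eventually_trapConditions hσ2 hp0 hd2 hτ hb1 hfit).and
    (nhdsWithin_le_nhds
      (eventually_mem_trapInterior hσ2 hp0 hp1 hd2 hτ hC ha1 hxabar hxdbar hfit))).exists
  intro A hA
  obtain ⟨ε₀, hε₀, hε₀1, hbox⟩ := exists_box_subset (isOpen_trapInterior ..) hq hA
  refine ⟨ε₀, hε₀, hε₀1,
    fun ε hε hεε₀ xa xd y hxa hxd hy hnn hpos hxa₁ hxa₂ hxd₁ hxd₂ hy₁ hy₂ => ?_⟩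
  have hs : IsSolution a1 b1 d1 d2 τ C σ2 p xa xd y :=
    ⟨hxa, hxd, hy, fun t ht => (hnn t ht).2.1, fun t ht => (hpos t ht).1⟩
  have h0 := hbox ε hε hεε₀ (xa 0, xd 0, y 0) (abs_sub_le_iff.2 ⟨by linarith, by linarith⟩)
    (abs_sub_le_iff.2 ⟨by linarith, by linarith⟩)
    (abs_sub_le_iff.2 ⟨by linarith, by linarith [sqrt_nonneg ε]⟩)
  rw [hybar]
  exact hs.tendsto hR hC hσ2.le hτ ha1 hb1 (trapRegion_of_mem_trapInterior h0)

/-- Under the fitness conditions `b1 − τ − d1 − C·x̄ₐ > 0` and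
`−(a1 + τ − d1 − C·ȳ) > σ2·p·C·ȳ/(d2+σ2)`, every nonnegative solution of the
three-dimensional competition system with reversed transfer (transfer towards
the bi-type population) started in `𝒜_ε` converges to `(0, 0, ȳ)`, for all
small `ε`. -/
theorem three_dim_competition_convergence_reversed_transfer
    (a1 b1 d1 d2 τ C σ2 p xabar xdbar ybar : ℝ)
    (hd1 : 0 ≤ d1) (ha1 : d1 < a1) (hb1 : d1 < b1) (hd2 : 0 ≤ d2) (hτ : 0 ≤ τ)
    (hC : 0 < C) (hσ2 : 0 < σ2) (hp0 : 0 < p) (hp1 : p < 1)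
    (hxabar : xabar = (a1 - d1) * (d2 + σ2) / (C * (d2 + (1 - p) * σ2)))
    (hxdbar : xdbar = p * (a1 - d1) ^ 2 * (d2 + σ2) / (C * (d2 + (1 - p) * σ2) ^ 2))
    (hybar : ybar = (b1 - d1) / C)
    (hfitY : 0 < b1 - τ - d1 - C * xabar)
    (hfitX : σ2 * p * C * ybar / (d2 + σ2) < -(a1 + τ - d1 - C * ybar)) :
    ∀ A : ℝ, 0 < A → ∃ ε₀ : ℝ, 0 < ε₀ ∧ ε₀ ≤ 1 ∧
      ∀ ε : ℝ, 0 < ε → ε ≤ ε₀ →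
        ∀ xa xd y : ℝ → ℝ,
          (∀ t, 0 ≤ t → HasDerivAt xa
            (xa t * (a1 - d1 - C * (xa t + y t)) + σ2 * xd t
              + τ * xa t * y t / (xa t + y t)) t) →
          (∀ t, 0 ≤ t → HasDerivAt xd
            (p * C * xa t * (xa t + y t) - (d2 + σ2) * xd t) t) →
          (∀ t, 0 ≤ t → HasDerivAt y
            (y t * (b1 - d1 - C * (xa t + y t))
              - τ * xa t * y t / (xa t + y t)) t) →
          (∀ t, 0 ≤ t → 0 ≤ xa t ∧ 0 ≤ xd t ∧ 0 ≤ y t) →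
          (∀ t, 0 ≤ t → 0 < y t ∧ 0 < xa t + y t) →
          xabar - 2 * A * Real.sqrt ε ≤ xa 0 → xa 0 ≤ xabar + 2 * A * Real.sqrt ε →
          xdbar - 2 * A * Real.sqrt ε ≤ xd 0 → xd 0 ≤ xdbar + 2 * A * Real.sqrt ε →
          ε ≤ y 0 → y 0 ≤ Real.sqrt ε →
          Filter.Tendsto (fun t => (xa t, xd t, y t)) Filter.atTop
            (nhds ((0 : ℝ), (0 : ℝ), ybar)) :=
  three_dim_competition_convergence_reversed_transfer_general a1 b1 d1 d2 τ C σ2 p xabar xdbar ybar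
    ha1 hb1 hd2 hτ hC hσ2 hp0 hp1 hxabar hxdbar hybar hfitX
end

section
/- Let r1, r2, a ∈ ℝ and σ1, σ2 > 0, and set λ = (r1 + r2 + √((r1 − r2)² + 4·σ1·σ2))/2. Then there exists a constant C̃ > 0, depending only on r1, r2, σ1, σ2 and a, such that for every M ≥ 0 and every differentiable solution (x, y) : [0, ∞) → ℝ² of the linear system x'(t) = r1·x(t) + σ2·y(t) + M·e^{a·t}, y'(t) = σ1·x(t) + r2·y(t) with x(0) ≥ 0 and y(0) ≥ 0, one has for all t ≥ 0: x(t) ≤ C̃·max((x(0) + y(0) + (1 + t)·M)·e^{λ·t}, M·e^{a·t}) and y(t) ≤ C̃·max((x(0) + y(0) + (1 + t)·M)·e^{λ·t}, M·e^{a·t}). -/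
/-!
For `z ∈ {λ, μ}`, the two (distinct) eigenvalues of `[[r1, σ2], [σ1, r2]]`, the row
`(σ1, z - r1)` is a left eigenvector, so along a solution `L = σ1 x + (z - r1) y` solves the
scalar equation `L' = z L + σ1 M e^{a t}`. By Duhamel's formula
`L t = e^{z t} L 0 + σ1 M ∫₀ᵗ e^{z (t - s) + a s} ds`; the integral is monotone in `z` and is
at most `t e^{z t}` when `a ≤ z` and `e^{a t} / (a - z)` when `a > z`. Hence both
combinations are bounded by a multiple of `max ((x 0 + y 0 + (1 + t) M) e^{λ t}, M e^{a t})`,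
and so are `x` and `y`, which are recovered from them by inverting a `2 × 2` system.
-/

open Real intervalIntegral

noncomputable def duhamel (c a t : ℝ) : ℝ := ∫ s in (0)..t, exp (c * (t - s) + a * s)

section Duhamel

variable {L : ℝ → ℝ} {c a k t : ℝ}

theorem eq_exp_mul_add_duhamel
    (hL : ∀ s, 0 ≤ s → HasDerivAt L (c * L s + k * exp (a * s)) s) (ht : 0 ≤ t) :
    L t = exp (c * t) * L 0 + k * duhamel c a t := by
  have hderiv : ∀ s ∈ Set.uIcc 0 t, HasDerivAt (fun u => exp (-(c * u)) * L u)
      (k * exp (-(c * s) + a * s)) s := by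
    intro s hs
    rw [Set.uIcc_of_le ht] at hs
    have hexp : HasDerivAt (fun u => exp (-(c * u))) (exp (-(c * s)) * -c) s :=
      ((hasDerivAt_id' s).const_mul c |>.neg.exp).congr_deriv (by simp)
    refine (hexp.mul (hL s hs.1)).congr_deriv ?_
    rw [exp_add]
    ring
  have hFTC :=
    integral_eq_sub_of_hasDerivAt hderiv (Continuous.intervalIntegrable (by fun_prop) _ _)
  have hscale : exp (c * t) * ∫ s in (0)..t, exp (-(c * s) + a * s) = duhamel c a t := by
    rw [duhamel, ← integral_const_mul]
    congr 1 with s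
    rw [← exp_add]
    ring_nf
  rw [← hscale, ← mul_assoc, mul_comm k, mul_assoc, ← integral_const_mul, hFTC]
  simp only [mul_zero, neg_zero, exp_zero, one_mul, exp_neg]
  field_simp
  ring

theorem duhamel_nonneg (ht : 0 ≤ t) : 0 ≤ duhamel c a t :=
  integral_nonneg ht fun _ _ => (exp_pos _).le

theorem duhamel_mono {c' : ℝ} (hc : c ≤ c') (ht : 0 ≤ t) : duhamel c a t ≤ duhamel c' a t :=
  integral_mono_on ht (Continuous.intervalIntegrable (by fun_prop) _ _)
    (Continuous.intervalIntegrable (by fun_prop) _ _) fun s hs =>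
    exp_le_exp.2 (by nlinarith [hs.2])

theorem exists_duhamel_le (c a : ℝ) :
    ∃ K, 0 < K ∧ ∀ t, 0 ≤ t → duhamel c a t ≤ K * max ((1 + t) * exp (c * t)) (exp (a * t)) := by
  rcases le_or_gt a c with hac | hca
  · refine ⟨1, one_pos, fun t ht => ?_⟩
    calc duhamel c a t ≤ ∫ _ in (0)..t, exp (c * t) :=
          integral_mono_on ht (Continuous.intervalIntegrable (by fun_prop) _ _)
            intervalIntegrable_const fun s hs => exp_le_exp.2 (by nlinarith [hs.1])
      _ ≤ (1 + t) * exp (c * t) := by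
          rw [integral_const, smul_eq_mul, sub_zero]
          nlinarith [exp_pos (c * t)]
      _ ≤ 1 * max ((1 + t) * exp (c * t)) (exp (a * t)) := by
          rw [one_mul]; exact le_max_left _ _
  · -- `exp (a s) / (a - c)` solves `L' = c L + exp (a s)`, which gives `duhamel` in closed form
    have hac : 0 < a - c := sub_pos.2 hca
    refine ⟨1 / (a - c), by positivity, fun t ht => ?_⟩
    have hsol : ∀ s, 0 ≤ s → HasDerivAt (fun u => exp (a * u) / (a - c))
        (c * (exp (a * s) / (a - c)) + 1 * exp (a * s)) s := fun s _ => by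
      refine (((hasDerivAt_id' s).const_mul a).exp.div_const (a - c)).congr_deriv ?_
      field_simp
      ring
    have hclosed := eq_exp_mul_add_duhamel hsol ht
    calc duhamel c a t = (exp (a * t) - exp (c * t)) / (a - c) := by
          simp only [mul_zero, exp_zero, one_mul] at hclosed
          field_simp at hclosed ⊢
          linarith
      _ ≤ exp (a * t) / (a - c) := by
          gcongr
          linarith [exp_pos (c * t)]
      _ ≤ 1 / (a - c) * max ((1 + t) * exp (c * t)) (exp (a * t)) := by
          rw [one_div_mul_eq_div]
          gcongr
          exact le_max_right _ _

theorem abs_le_exp_mul_add_duhamel {z : ℝ} (hz : z ≤ c)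
    (hL : ∀ s, 0 ≤ s → HasDerivAt L (z * L s + k * exp (a * s)) s) (ht : 0 ≤ t) :
    |L t| ≤ exp (c * t) * |L 0| + |k| * duhamel c a t := by
  rw [eq_exp_mul_add_duhamel hL ht]
  calc |exp (z * t) * L 0 + k * duhamel z a t|
      ≤ exp (z * t) * |L 0| + |k| * duhamel z a t := by
        grw [abs_add_le, abs_mul, abs_mul, abs_exp, abs_of_nonneg (duhamel_nonneg ht)]
    _ ≤ exp (c * t) * |L 0| + |k| * duhamel c a t := by
        gcongr
        exact duhamel_mono hz ht

end Duhamel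

theorem abs_le_of_abs_combination_le {α z w u v A : ℝ} (hα : α ≠ 0) (hzw : z ≠ w)
    (hz : |α * u + z * v| ≤ A) (hw : |α * u + w * v| ≤ A) :
    |u| ≤ (|z| + |w|) / (|α| * |z - w|) * A ∧ |v| ≤ 2 / |z - w| * A := by
  have hzw' : z - w ≠ 0 := sub_ne_zero.2 hzw
  have hu : u = (z * (α * u + w * v) - w * (α * u + z * v)) / (α * (z - w)) := by
    field_simp
    ring
  have hv : v = ((α * u + z * v) - (α * u + w * v)) / (z - w) := by
    field_simp
    ring
  constructor
  · rw [hu, abs_div, abs_mul, div_mul_eq_mul_div]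
    gcongr
    grw [abs_sub, abs_mul, abs_mul, hz, hw]
    linarith
  · rw [hv, abs_div, div_mul_eq_mul_div]
    gcongr
    grw [abs_sub, hz, hw]
    linarith

section System

variable {r1 r2 σ1 σ2 z : ℝ} {x y : ℝ → ℝ}

theorem hasDerivAt_eigencombination {f t : ℝ} (hz : (z - r1) * (z - r2) = σ1 * σ2)
    (hx : HasDerivAt x (r1 * x t + σ2 * y t + f) t)
    (hy : HasDerivAt y (σ1 * x t + r2 * y t) t) :
    HasDerivAt (fun s => σ1 * x s + (z - r1) * y s)
      (z * (σ1 * x t + (z - r1) * y t) + σ1 * f) t :=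
  ((hx.const_mul σ1).add (hy.const_mul (z - r1))).congr_deriv
    (by linear_combination (-(y t)) * hz)

theorem abs_eigencombination_le {c a M K t : ℝ} (hσ1 : 0 ≤ σ1)
    (hz : (z - r1) * (z - r2) = σ1 * σ2) (hzc : z ≤ c) (hK0 : 0 ≤ K)
    (hK : duhamel c a t ≤ K * max ((1 + t) * exp (c * t)) (exp (a * t))) (hM : 0 ≤ M)
    (hx : ∀ s, 0 ≤ s → HasDerivAt x (r1 * x s + σ2 * y s + M * exp (a * s)) s)
    (hy : ∀ s, 0 ≤ s → HasDerivAt y (σ1 * x s + r2 * y s) s)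
    (hx0 : 0 ≤ x 0) (hy0 : 0 ≤ y 0) (ht : 0 ≤ t) :
    |σ1 * x t + (z - r1) * y t| ≤ (σ1 + |z - r1| + σ1 * K) *
      max ((x 0 + y 0 + (1 + t) * M) * exp (c * t)) (M * exp (a * t)) := by
  set B := max ((x 0 + y 0 + (1 + t) * M) * exp (c * t)) (M * exp (a * t))
  have hinitial : (x 0 + y 0) * exp (c * t) ≤ B :=
    le_max_of_le_left <| mul_le_mul_of_nonneg_right
      (le_add_of_nonneg_right (by positivity)) (exp_pos _).le
  have hforcing : M * max ((1 + t) * exp (c * t)) (exp (a * t)) ≤ B := by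
    rw [mul_max_of_nonneg _ _ hM]
    exact max_le_max (by nlinarith [exp_pos (c * t)]) le_rfl
  have hL0 : |σ1 * x 0 + (z - r1) * y 0| ≤ (σ1 + |z - r1|) * (x 0 + y 0) := by
    grw [abs_add_le, abs_mul, abs_mul, abs_of_nonneg hσ1, abs_of_nonneg hx0, abs_of_nonneg hy0]
    nlinarith [abs_nonneg (z - r1)]
  calc |σ1 * x t + (z - r1) * y t|
      ≤ exp (c * t) * |σ1 * x 0 + (z - r1) * y 0| + |σ1 * M| * duhamel c a t :=
        abs_le_exp_mul_add_duhamel hzc (fun s hs =>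
          (hasDerivAt_eigencombination hz (hx s hs) (hy s hs)).congr_deriv (by ring)) ht
    _ ≤ (σ1 + |z - r1|) * ((x 0 + y 0) * exp (c * t)) +
          σ1 * K * (M * max ((1 + t) * exp (c * t)) (exp (a * t))) := by
        grw [hL0, abs_mul, abs_of_nonneg hσ1, abs_of_nonneg hM, hK]
        linarith
    _ ≤ (σ1 + |z - r1| + σ1 * K) * B := by
        grw [hinitial, hforcing]
        linarith

end System

/-- Expected-value bound for a bi-type branching process with exponential
immigration: there is a constant `C̃ > 0` (depending only on `r1, r2, σ1, σ2, a`)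
such that every nonnegative solution of the linear system
`x' = r1·x + σ2·y + M·e^{a t}`, `y' = σ1·x + r2·y` satisfies
`x(t), y(t) ≤ C̃·max((x(0)+y(0)+(1+t)M)·e^{λ t}, M·e^{a t})`. -/
theorem bitype_expectation_bound
    (r1 r2 a σ1 σ2 lam : ℝ) (hσ1 : 0 < σ1) (hσ2 : 0 < σ2)
    (hlam : lam = (r1 + r2 + Real.sqrt ((r1 - r2) ^ 2 + 4 * σ1 * σ2)) / 2) :
    ∃ Ctilde : ℝ, 0 < Ctilde ∧
      ∀ M : ℝ, 0 ≤ M →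
        ∀ x y : ℝ → ℝ,
          (∀ t, 0 ≤ t →
            HasDerivAt x (r1 * x t + σ2 * y t + M * Real.exp (a * t)) t) →
          (∀ t, 0 ≤ t → HasDerivAt y (σ1 * x t + r2 * y t) t) →
          0 ≤ x 0 → 0 ≤ y 0 →
          ∀ t, 0 ≤ t →
            x t ≤ Ctilde * max ((x 0 + y 0 + (1 + t) * M) * Real.exp (lam * t))
              (M * Real.exp (a * t)) ∧
            y t ≤ Ctilde * max ((x 0 + y 0 + (1 + t) * M) * Real.exp (lam * t))
              (M * Real.exp (a * t)) := by
  obtain ⟨K, hK0, hK⟩ := exists_duhamel_le lam a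
  set μ := (r1 + r2 - √((r1 - r2) ^ 2 + 4 * σ1 * σ2)) / 2 with hμ
  have hsq := sq_sqrt (by positivity : 0 ≤ (r1 - r2) ^ 2 + 4 * σ1 * σ2)
  have hgap : 0 < √((r1 - r2) ^ 2 + 4 * σ1 * σ2) := sqrt_pos.2 (by positivity)
  have hlam_root : (lam - r1) * (lam - r2) = σ1 * σ2 := by
    rw [hlam]; linear_combination hsq / 4
  have hμ_root : (μ - r1) * (μ - r2) = σ1 * σ2 := by
    rw [hμ]; linear_combination hsq / 4
  have hμlam : μ < lam := by rw [hlam, hμ]; linarith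
  set A := σ1 + |lam - r1| + |μ - r1| + σ1 * K
  set d := |lam - r1 - (μ - r1)|
  have hd : 0 < d := abs_pos.2 (by linarith)
  refine ⟨((|lam - r1| + |μ - r1|) / (|σ1| * d) + 2 / d) * A, by positivity, ?_⟩
  intro M hM x y hx hy hx0 hy0 t ht
  set B := max ((x 0 + y 0 + (1 + t) * M) * exp (lam * t)) (M * exp (a * t))
  have hB : 0 ≤ B := le_max_of_le_right (by positivity)
  have hLlam : |σ1 * x t + (lam - r1) * y t| ≤ A * B :=
    (abs_eigencombination_le hσ1.le hlam_root le_rfl hK0.le (hK t ht) hM hx hy hx0 hy0 ht).trans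
      (by gcongr; linarith [abs_nonneg (μ - r1)])
  have hLμ : |σ1 * x t + (μ - r1) * y t| ≤ A * B :=
    (abs_eigencombination_le hσ1.le hμ_root hμlam.le hK0.le (hK t ht) hM hx hy hx0 hy0 ht).trans
      (by gcongr; linarith [abs_nonneg (lam - r1)])
  obtain ⟨hxA, hyA⟩ := abs_le_of_abs_combination_le hσ1.ne' (by linarith) hLlam hLμ
  have hcx : 0 ≤ (|lam - r1| + |μ - r1|) / (|σ1| * d) * (A * B) := by positivity
  have hcy : 0 ≤ 2 / d * (A * B) := by positivity
  constructor <;> linarith [le_abs_self (x t), le_abs_self (y t)]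
end
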